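/- arXiv:2407.00314 — 12 statements merged into one kernel-verified Lean document; each statement's English description precedes it below -/
import Mathlib

section
/- Let N ≥ 1 and let P : ℝ^N → ℝ^N satisfy monotonicity, strict monotonicity, and non-expansion. If for some f ∈ ℝ^N the orbit sequence (P^n f)_{n≥0} has a finite accumulation point g ∈ ℝ^N, then Pg = g and P^n f → g in the sup norm as n → ∞. -/
open Filter

theorem stmt0 (N : ℕ) (hN : 1 ≤ N) (P : (Fin N → ℝ) → (Fin N → ℝ))
    (mono : ∀ f g : Fin N → ℝ, (∀ x, g x ≤ f x) → ∀ x, P g x ≤ P f x)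
    (smono : ∀ f g : Fin N → ℝ, (∀ x, g x ≤ f x) → ∀ x, g x < f x → P g x < P f x)
    (nonexp : ∀ f g : Fin N → ℝ, ‖P f - P g‖ ≤ ‖f - g‖)
    (f g : Fin N → ℝ) (φ : ℕ → ℕ) (hφ : StrictMono φ)
    (hacc : Tendsto (fun k => P^[φ k] f) atTop (nhds g)) :
    P g = g ∧ Tendsto (fun n => P^[n] f) atTop (nhds g) := by
  have hne : Nonempty (Fin N) := ⟨⟨0, hN⟩⟩
  -- P is continuous (1-Lipschitz)
  have Pcont : Continuous P := (LipschitzWith.of_dist_le_mul (K := 1) (fun a b => by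
    simp only [NNReal.coe_one, one_mul, dist_eq_norm]; exact nonexp a b)).continuous
  -- iterates are nonexpansive
  have iternon : ∀ (n : ℕ) (a b : Fin N → ℝ), ‖P^[n] a - P^[n] b‖ ≤ ‖a - b‖ := by
    intro n
    induction n with
    | zero => intro a b; simp
    | succ n ih =>
      intro a b
      rw [Function.iterate_succ_apply', Function.iterate_succ_apply']
      exact (nonexp _ _).trans (ih a b)
  -- sup norm attained at some coordinate
  have attain : ∀ v : Fin N → ℝ, ∃ x, |v x| = ‖v‖ := by
    intro v
    obtain ⟨x, -, hx⟩ := Finset.exists_mem_eq_sup (Finset.univ : Finset (Fin N))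
      ⟨⟨0, hN⟩, Finset.mem_univ _⟩ (fun i => ‖v i‖₊)
    exact ⟨x, by rw [Pi.norm_def, hx]; simp [Real.norm_eq_abs]⟩
  -- pointwise bound by sup norm
  have pbound : ∀ (v : Fin N → ℝ) (x : Fin N), |v x| ≤ ‖v‖ := fun v x => by
    simpa [Real.norm_eq_abs] using norm_le_pi_norm v x
  -- translation estimates
  have transl_up : ∀ (h : Fin N → ℝ) (c : ℝ), 0 ≤ c → ∀ x,
      P (fun y => h y + c) x ≤ P h x + c := by
    intro h c hc x
    have h0 : ‖P (fun y => h y + c) - P h‖ ≤ c := by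
      refine (nonexp _ _).trans ?_
      have : (fun y => h y + c) - h = fun _ => c := by funext y; simp
      rw [this, pi_norm_const]
      simp [Real.norm_eq_abs, abs_of_nonneg hc]
    have h1 := (pbound (P (fun y => h y + c) - P h) x).trans h0
    rw [Pi.sub_apply] at h1
    have := (abs_le.mp h1).2
    linarith
  have transl_dn : ∀ (h : Fin N → ℝ) (c : ℝ), 0 ≤ c → ∀ x,
      P h x - c ≤ P (fun y => h y - c) x := by
    intro h c hc x
    have h0 : ‖P h - P (fun y => h y - c)‖ ≤ c := by
      refine (nonexp _ _).trans ?_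
      have : h - (fun y => h y - c) = fun _ => c := by funext y; simp
      rw [this, pi_norm_const]
      simp [Real.norm_eq_abs, abs_of_nonneg hc]
    have h1 := (pbound (P h - P (fun y => h y - c)) x).trans h0
    rw [Pi.sub_apply] at h1
    have := (abs_le.mp h1).2
    linarith
  -- the sequence of consecutive distances along the orbit of f
  set a : ℕ → ℝ := fun n => ‖P^[n+1] f - P^[n] f‖ with ha
  have aanti : Antitone a := antitone_nat_of_succ_le (fun n => by
    show ‖P^[n+1+1] f - P^[n+1] f‖ ≤ ‖P^[n+1] f - P^[n] f‖
    rw [Function.iterate_succ_apply' P (n+1), Function.iterate_succ_apply' P n]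
    exact nonexp _ _)
  have abdd : BddBelow (Set.range a) := ⟨0, by rintro y ⟨n, rfl⟩; exact norm_nonneg _⟩
  have atend : Tendsto a atTop (nhds (⨅ n, a n)) := tendsto_atTop_ciInf aanti abdd
  -- subsequence limits: for every q the shifted subsequence converges
  have subseq : ∀ q : ℕ, Tendsto (fun k => a (q + φ k)) atTop
      (nhds ‖P^[q+1] g - P^[q] g‖) := by
    intro q
    have h1 : Tendsto (fun k => P^[q+1] (P^[φ k] f) - P^[q] (P^[φ k] f)) atTop
        (nhds (P^[q+1] g - P^[q] g)) :=
      (((Pcont.iterate (q+1)).tendsto g).comp hacc).sub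
        (((Pcont.iterate q).tendsto g).comp hacc)
    have h2 := h1.norm
    refine h2.congr (fun k => ?_)
    have e1 : P^[q + φ k + 1] f = P^[q+1] (P^[φ k] f) := by
      rw [show q + φ k + 1 = (q+1) + φ k by ring, Function.iterate_add_apply]
    have e2 : P^[q + φ k] f = P^[q] (P^[φ k] f) := Function.iterate_add_apply P q (φ k) f
    show ‖P^[q+1] (P^[φ k] f) - P^[q] (P^[φ k] f)‖ = ‖P^[q + φ k + 1] f - P^[q + φ k] f‖
    rw [e1, e2]
  have shift_tendsto : ∀ q : ℕ, Tendsto (fun k => q + φ k) atTop atTop := fun q =>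
    tendsto_atTop_mono (fun k => Nat.le_add_left (φ k) q) hφ.tendsto_atTop
  have const_lim : ∀ q : ℕ, ‖P^[q+1] g - P^[q] g‖ = ⨅ n, a n := fun q =>
    tendsto_nhds_unique (subseq q) (atend.comp (shift_tendsto q))
  have hc1 : ∀ q : ℕ, ‖P^[q+1] g - P^[q] g‖ = ‖P g - g‖ := by
    intro q
    rw [const_lim q, ← const_lim 0]
    simp
  -- step 2: approximate returns for g
  have haccn : Tendsto (fun k => ‖P^[φ k] f - g‖) atTop (nhds 0) :=
    tendsto_iff_norm_sub_tendsto_zero.mp hacc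
  have step2 : Tendsto (fun k => ‖P^[φ (k+1) - φ k] g - g‖) atTop (nhds 0) := by
    have bound : ∀ k, ‖P^[φ (k+1) - φ k] g - g‖ ≤ ‖g - P^[φ k] f‖ + ‖P^[φ (k+1)] f - g‖ := by
      intro k
      have hle : φ k ≤ φ (k+1) := (hφ (Nat.lt_succ_self k)).le
      have e1 : P^[φ (k+1) - φ k] (P^[φ k] f) = P^[φ (k+1)] f := by
        rw [← Function.iterate_add_apply, Nat.sub_add_cancel hle]
      have tri := dist_triangle (P^[φ (k+1) - φ k] g) (P^[φ (k+1)] f) g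
      rw [dist_eq_norm, dist_eq_norm, dist_eq_norm] at tri
      refine tri.trans (add_le_add ?_ le_rfl)
      rw [← e1]
      exact iternon _ _ _
    refine squeeze_zero (fun k => norm_nonneg _) bound ?_
    have t1 : Tendsto (fun k => ‖g - P^[φ k] f‖) atTop (nhds 0) := by
      simpa [norm_sub_rev] using haccn
    have t2 : Tendsto (fun k => ‖P^[φ (k+1)] f - g‖) atTop (nhds 0) :=
      haccn.comp (tendsto_add_atTop_nat 1)
    simpa using t1.add t2
  -- step 3: g is a fixed point
  have hfix : P g = g := by
    by_contra hne'
    have hc : 0 < ‖P g - g‖ := by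
      rw [norm_pos_iff]
      exact sub_ne_zero.mpr hne'
    set c := ‖P g - g‖ with hcdef
    obtain ⟨k0, hk0⟩ := (step2.eventually_lt_const hc).exists
    have hMpos : 0 < φ (k0+1) - φ k0 := Nat.sub_pos_of_lt (hφ (Nat.lt_succ_self k0))
    obtain ⟨M', hM'⟩ : ∃ M', φ (k0+1) - φ k0 = M' + 1 :=
      ⟨φ (k0+1) - φ k0 - 1, by omega⟩
    rw [hM'] at hk0
    -- pointwise bounds for consecutive steps of the orbit of g
    have pb : ∀ (n : ℕ) (x : Fin N), |P^[n+1] g x - P^[n] g x| ≤ c := by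
      intro n x
      have h := pbound (P^[n+1] g - P^[n] g) x
      rw [hc1 n] at h
      simpa using h
    -- propagation of strict inequality (upper side)
    have A : ∀ (n : ℕ) (x : Fin N), P^[n+1] g x - P^[n] g x < c →
        P^[n+1+1] g x - P^[n+1] g x < c := by
      intro n x hx
      have hle : ∀ y, P^[n+1] g y ≤ P^[n] g y + c := fun y => by
        have := (abs_le.mp (pb n y)).2; linarith
      have h1 : P (P^[n+1] g) x < P (fun y => P^[n] g y + c) x :=
        smono _ _ hle x (by linarith)
      have h2 : P (fun y => P^[n] g y + c) x ≤ P (P^[n] g) x + c :=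
        transl_up _ _ hc.le x
      have e1 : P^[n+1+1] g x = P (P^[n+1] g) x := by
        rw [Function.iterate_succ_apply']
      have e2 : P^[n+1] g x = P (P^[n] g) x := by
        rw [Function.iterate_succ_apply']
      rw [e1, e2]
      linarith
    -- propagation of strict inequality (lower side)
    have B : ∀ (n : ℕ) (x : Fin N), P^[n] g x - c < P^[n+1] g x →
        P^[n+1] g x - c < P^[n+1+1] g x := by
      intro n x hx
      have hle : ∀ y, P^[n] g y - c ≤ P^[n+1] g y := fun y => by
        have := (abs_le.mp (pb n y)).1; linarith
      have h1 : P (fun y => P^[n] g y - c) x < P (P^[n+1] g) x :=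
        smono _ _ hle x (by linarith)
      have h2 : P (P^[n] g) x - c ≤ P (fun y => P^[n] g y - c) x :=
        transl_dn _ _ hc.le x
      have e1 : P^[n+1+1] g x = P (P^[n+1] g) x := by
        rw [Function.iterate_succ_apply']
      have e2 : P^[n+1] g x = P (P^[n] g) x := by
        rw [Function.iterate_succ_apply']
      rw [e1, e2]
      linarith
    -- a coordinate attaining the norm at step M'
    obtain ⟨x, hx⟩ := attain (P^[M'+1] g - P^[M'] g)
    rw [hc1 M'] at hx
    rw [Pi.sub_apply] at hx
    rcases (abs_eq hc.le).mp hx with hxc | hxc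
    · -- upper case: steps equal +c all the way up to M'
      have propA : ∀ (d n : ℕ), P^[n+1] g x - P^[n] g x < c →
          P^[n+d+1] g x - P^[n+d] g x < c := by
        intro d
        induction d with
        | zero => intro n h; exact h
        | succ d ih => intro n h; exact A (n+d) x (ih n h)
      have eqA : ∀ n, n ≤ M' → P^[n+1] g x - P^[n] g x = c := by
        intro n hn
        by_contra hne2
        have hlt : P^[n+1] g x - P^[n] g x < c :=
          lt_of_le_of_ne (by have := (abs_le.mp (pb n x)).2; linarith) hne2
        have h := propA (M' - n) n hlt
        rw [Nat.add_sub_cancel' hn] at h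
        linarith
      have tele : ∀ n, n ≤ M' + 1 → P^[n] g x = g x + n * c := by
        intro n
        induction n with
        | zero => intro _; simp
        | succ n ih =>
          intro hn
          have h1 := ih (Nat.le_of_succ_le hn)
          have h2 := eqA n (Nat.lt_succ_iff.mp hn)
          have : P^[n+1] g x = P^[n] g x + c := by linarith
          rw [this, h1]
          push_cast
          ring
      have hfin := tele (M'+1) le_rfl
      have hub := pbound (P^[M'+1] g - g) x
      rw [Pi.sub_apply, hfin] at hub
      push_cast at hub
      have habs : |g x + ((M':ℝ)+1) * c - g x| = ((M':ℝ)+1) * c := by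
        rw [show g x + ((M':ℝ)+1) * c - g x = ((M':ℝ)+1) * c by ring]
        exact abs_of_nonneg (by nlinarith [Nat.cast_nonneg (α := ℝ) M'])
      rw [habs] at hub
      nlinarith [Nat.cast_nonneg (α := ℝ) M', hk0, hc]
    · -- lower case: steps equal -c all the way up to M'
      have propB : ∀ (d n : ℕ), P^[n] g x - c < P^[n+1] g x →
          P^[n+d] g x - c < P^[n+d+1] g x := by
        intro d
        induction d with
        | zero => intro n h; exact h
        | succ d ih => intro n h; exact B (n+d) x (ih n h)
      have eqB : ∀ n, n ≤ M' → P^[n+1] g x - P^[n] g x = -c := by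
        intro n hn
        by_contra hne2
        have hlt : P^[n] g x - c < P^[n+1] g x := by
          have h1 := (abs_le.mp (pb n x)).1
          rcases lt_or_eq_of_le h1 with h | h
          · linarith
          · exact absurd h.symm hne2
        have h := propB (M' - n) n hlt
        rw [Nat.add_sub_cancel' hn] at h
        linarith
      have tele : ∀ n, n ≤ M' + 1 → P^[n] g x = g x - n * c := by
        intro n
        induction n with
        | zero => intro _; simp
        | succ n ih =>
          intro hn
          have h1 := ih (Nat.le_of_succ_le hn)
          have h2 := eqB n (Nat.lt_succ_iff.mp hn)
          have : P^[n+1] g x = P^[n] g x - c := by linarith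
          rw [this, h1]
          push_cast
          ring
      have hfin := tele (M'+1) le_rfl
      have hub := pbound (P^[M'+1] g - g) x
      rw [Pi.sub_apply, hfin] at hub
      push_cast at hub
      have habs : |g x - ((M':ℝ)+1) * c - g x| = ((M':ℝ)+1) * c := by
        rw [show g x - ((M':ℝ)+1) * c - g x = -(((M':ℝ)+1) * c) by ring, abs_neg]
        exact abs_of_nonneg (by nlinarith [Nat.cast_nonneg (α := ℝ) M'])
      rw [habs] at hub
      nlinarith [Nat.cast_nonneg (α := ℝ) M', hk0, hc]
  -- step 4: full convergence
  refine ⟨hfix, ?_⟩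
  set b : ℕ → ℝ := fun n => ‖P^[n] f - g‖ with hb
  have banti : Antitone b := antitone_nat_of_succ_le (fun n => by
    show ‖P^[n+1] f - g‖ ≤ ‖P^[n] f - g‖
    calc ‖P^[n+1] f - g‖ = ‖P (P^[n] f) - P g‖ := by
          rw [Function.iterate_succ_apply', hfix]
      _ ≤ ‖P^[n] f - g‖ := nonexp _ _)
  have bbdd : BddBelow (Set.range b) := ⟨0, by rintro y ⟨n, rfl⟩; exact norm_nonneg _⟩
  have btend : Tendsto b atTop (nhds (⨅ n, b n)) := tendsto_atTop_ciInf banti bbdd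
  have bsub2 : Tendsto (fun k => b (φ k)) atTop (nhds (⨅ n, b n)) :=
    btend.comp hφ.tendsto_atTop
  have hzero : (⨅ n, b n) = 0 := tendsto_nhds_unique bsub2 haccn
  exact tendsto_iff_norm_sub_tendsto_zero.mpr (hzero ▸ btend)
end

section
/- Let N ≥ 1, fix a coordinate x₀, and let P : ℝ^N → ℝ^N satisfy monotonicity, strict monotonicity, and constant additivity. Given f ∈ ℝ^N, set f_n := P^n f − P^n f(x₀)·𝟙. If the sequence (f_n) has a finite accumulation point g ∈ ℝ^N, then f_n → g in the sup norm as n → ∞. -/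
/-!
`P` is nonexpansive for the oscillation seminorm `osc h = max h - min h`, which ignores constants,
so `osc (P^[n+1] f - P^[n] f)` decreases to a limit `L`, and by continuity the accumulation point
satisfies `osc (P^[t+1] g - P^[t] g) = L` for every `t`. By strict monotonicity, equality in the
nonexpansive estimate forces a pair of points realizing the maximum and the minimum of
`P^[t+1] g - P^[t] g` to realize those of `P^[t] g - P^[t-1] g` too. By finiteness one pair works
for all `t`, and telescoping gives `osc (P^[k] g - g) ≥ k L`. As `g` is an accumulation point,
`osc (P^[k] g - g)` is arbitrarily small for suitable `k ≥ 1`, so `L = 0`: `P g = g + c`.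
Then `osc (f_n - g)` is nonincreasing and tends to `0` along the subsequence, and it bounds the sup
norm of `f_n - g`, which vanishes at `x₀`.
-/

open Filter Topology

lemma exists_forall_mem_of_antitone {α : Type*} [Finite α] {S : ℕ → Set α} (hS : Antitone S)
    (hne : ∀ t, (S t).Nonempty) : ∃ x, ∀ t, x ∈ S t := by
  choose x hx using hne
  obtain ⟨y, hy⟩ := Finite.exists_infinite_fiber x
  refine ⟨y, fun t => ?_⟩
  obtain ⟨s, hs, hts⟩ := (Set.infinite_coe_iff.1 hy).exists_gt t
  rw [Set.mem_preimage, Set.mem_singleton_iff] at hs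
  exact hS hts.le (hs ▸ hx s)

section Oscillation

variable {ι : Type*}

noncomputable def osc (h : ι → ℝ) : ℝ := (⨆ x, h x) - ⨅ x, h x

lemma osc_le [Nonempty ι] {h : ι → ℝ} {c : ℝ} (H : ∀ x y, h x - h y ≤ c) : osc h ≤ c := by
  have : (⨆ x, h x) ≤ c + ⨅ x, h x :=
    ciSup_le fun x => by
      have : h x - c ≤ ⨅ y, h y := le_ciInf fun y => by linarith [H x y]
      linarith
  unfold osc
  linarith

variable [Finite ι]

lemma sub_le_osc (h : ι → ℝ) (x y : ι) : h x - h y ≤ osc h :=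
  sub_le_sub (le_ciSup (Finite.bddAbove_range h) x) (ciInf_le (Finite.bddBelow_range h) y)

lemma apply_eq_of_osc_eq_zero {h : ι → ℝ} (h0 : osc h = 0) (x y : ι) : h x = h y := by
  linarith [sub_le_osc h x y, sub_le_osc h y x]

variable [Nonempty ι]

lemma exists_sub_eq_osc (h : ι → ℝ) : ∃ x y, h x - h y = osc h := by
  obtain ⟨x, hx⟩ := exists_eq_ciSup_of_finite (f := h)
  obtain ⟨y, hy⟩ := exists_eq_ciInf_of_finite (f := h)
  exact ⟨x, y, by rw [hx, hy, osc]⟩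

lemma osc_nonneg (h : ι → ℝ) : 0 ≤ osc h := by
  simpa using sub_le_osc h (Classical.arbitrary ι) (Classical.arbitrary ι)

lemma osc_add_le (u v : ι → ℝ) : osc (u + v) ≤ osc u + osc v :=
  osc_le fun x y => by
    simp only [Pi.add_apply]
    linarith [sub_le_osc u x y, sub_le_osc v x y]

lemma osc_sub_comm (u v : ι → ℝ) : osc (u - v) = osc (v - u) := by
  have key : ∀ u v : ι → ℝ, osc (u - v) ≤ osc (v - u) := fun u v =>
    osc_le fun x y => by
      simp only [Pi.sub_apply]
      linarith [sub_le_osc (v - u) y x, Pi.sub_apply v u x, Pi.sub_apply v u y]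
  exact le_antisymm (key u v) (key v u)

lemma osc_eq_of_forall_eq_add {u v : ι → ℝ} {c : ℝ} (H : ∀ x, u x = v x + c) :
    osc u = osc v :=
  le_antisymm (osc_le fun x y => by linarith [H x, H y, sub_le_osc v x y])
    (osc_le fun x y => by linarith [H x, H y, sub_le_osc u x y])

end Oscillation

section OscillationNorm

variable {ι : Type*} [Fintype ι] [Nonempty ι]

lemma osc_le_two_mul_norm (h : ι → ℝ) : osc h ≤ 2 * ‖h‖ :=
  osc_le fun x y => by
    have hx := norm_le_pi_norm h x
    have hy := norm_le_pi_norm h y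
    rw [Real.norm_eq_abs] at hx hy
    linarith [le_abs_self (h x), neg_abs_le (h y)]

lemma lipschitzWith_osc : LipschitzWith 2 (osc : (ι → ℝ) → ℝ) :=
  LipschitzWith.of_le_add_mul 2 fun u v => by
    calc osc u = osc (v + (u - v)) := by rw [add_sub_cancel]
      _ ≤ osc v + osc (u - v) := osc_add_le v (u - v)
      _ ≤ osc v + 2 * dist u v := by
        rw [dist_eq_norm]; linarith [osc_le_two_mul_norm (u - v)]

lemma norm_le_osc_of_apply_eq_zero {h : ι → ℝ} {x₀ : ι} (h0 : h x₀ = 0) : ‖h‖ ≤ osc h :=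
  (pi_norm_le_iff_of_nonneg (osc_nonneg h)).2 fun x => by
    rw [Real.norm_eq_abs, abs_le]
    constructor <;> linarith [sub_le_osc h x x₀, sub_le_osc h x₀ x]

lemma tendsto_osc_sub_of_tendsto {α : Type*} {l : Filter α} {u : α → ι → ℝ} {g : ι → ℝ}
    (hu : Tendsto u l (𝓝 g)) : Tendsto (fun i => osc (u i - g)) l (𝓝 0) := by
  refine squeeze_zero (fun i => osc_nonneg _) (fun i => osc_le_two_mul_norm _) ?_
  simpa using (tendsto_iff_norm_sub_tendsto_zero.1 hu).const_mul 2

end OscillationNorm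

section TopicalMap

variable {ι : Type*}

def AdditivelyHomogeneous (P : (ι → ℝ) → ι → ℝ) : Prop :=
  ∀ (f : ι → ℝ) (c : ℝ), P (fun x => f x + c) = fun x => P f x + c

variable {P : (ι → ℝ) → ι → ℝ}

lemma apply_sub_apply_le (hmono : Monotone P) (hadd : AdditivelyHomogeneous P) {a b : ι → ℝ}
    {c : ℝ} (H : ∀ y, a y - b y ≤ c) (x : ι) : P a x - P b x ≤ c := by
  have := hmono (show a ≤ fun y => b y + c from fun y => by linarith [H y]) x
  rw [hadd] at this
  linarith

lemma apply_sub_apply_lt (hstrict : ∀ f g : ι → ℝ, g ≤ f → ∀ x, g x < f x → P g x < P f x)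
    (hadd : AdditivelyHomogeneous P) {a b : ι → ℝ} {c : ℝ} (H : ∀ y, a y - b y ≤ c) {x : ι}
    (hx : a x - b x < c) : P a x - P b x < c := by
  have := hstrict (fun y => b y + c) a (fun y => by linarith [H y]) x (by linarith)
  rw [hadd] at this
  linarith

lemma iterate_sub_const (hadd : AdditivelyHomogeneous P) (k : ℕ) (f : ι → ℝ) (c : ℝ) :
    P^[k] (fun x => f x - c) = fun x => P^[k] f x - c := by
  induction k with
  | zero => rfl
  | succ k ih =>
    rw [Function.iterate_succ_apply', Function.iterate_succ_apply', ih]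
    simpa only [sub_eq_add_neg] using hadd (P^[k] f) (-c)

lemma lipschitzWith_one_of_monotone [Fintype ι] (hmono : Monotone P)
    (hadd : AdditivelyHomogeneous P) : LipschitzWith 1 P :=
  LipschitzWith.of_dist_le_mul fun a b => by
    rw [NNReal.coe_one, one_mul, dist_pi_le_iff dist_nonneg]
    intro x
    have hab : ∀ y, a y - b y ≤ dist a b := fun y =>
      (le_abs_self _).trans (dist_le_pi_dist a b y)
    have hba : ∀ y, b y - a y ≤ dist a b := fun y =>
      (le_abs_self _).trans ((abs_sub_comm _ _).trans_le (dist_le_pi_dist a b y))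
    rw [Real.dist_eq, abs_le]
    constructor <;>
      linarith [apply_sub_apply_le hmono hadd hab x, apply_sub_apply_le hmono hadd hba x]

variable [Finite ι]

lemma sub_eq_osc_of_apply_sub_eq_osc (hmono : Monotone P)
    (hstrict : ∀ f g : ι → ℝ, g ≤ f → ∀ x, g x < f x → P g x < P f x)
    (hadd : AdditivelyHomogeneous P) {a b : ι → ℝ} (hosc : osc (P a - P b) = osc (a - b))
    {y z : ι} (h : (P a - P b) y - (P a - P b) z = osc (P a - P b)) :
    (a - b) y - (a - b) z = osc (a - b) := by
  set M := ⨆ x, (a - b) x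
  set m := ⨅ x, (a - b) x
  have hM : ∀ x, a x - b x ≤ M := fun x => le_ciSup (Finite.bddAbove_range (a - b)) x
  have hm : ∀ x, b x - a x ≤ -m := fun x => by
    linarith [ciInf_le (Finite.bddBelow_range (a - b)) x, Pi.sub_apply a b x]
  simp only [Pi.sub_apply] at h ⊢
  rw [hosc, osc] at h
  rw [osc]
  have hPy := apply_sub_apply_le hmono hadd hM y
  have hPz := apply_sub_apply_le hmono hadd hm z
  have hyM : a y - b y = M := by
    by_contra hne
    linarith [apply_sub_apply_lt hstrict hadd hM (lt_of_le_of_ne (hM y) hne)]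
  have hzm : b z - a z = -m := by
    by_contra hne
    linarith [apply_sub_apply_lt hstrict hadd hm (lt_of_le_of_ne (hm z) hne)]
  linarith

variable [Nonempty ι]

lemma osc_apply_sub_le (hmono : Monotone P) (hadd : AdditivelyHomogeneous P) (a b : ι → ℝ) :
    osc (P a - P b) ≤ osc (a - b) :=
  osc_le fun x y => by
    have hx := apply_sub_apply_le hmono hadd (fun z => le_ciSup (Finite.bddAbove_range (a - b)) z) x
    have hy := apply_sub_apply_le hmono hadd (a := b) (b := a) (c := -⨅ z, (a - b) z)
      (fun z => by linarith [ciInf_le (Finite.bddBelow_range (a - b)) z, Pi.sub_apply a b z]) y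
    simp only [Pi.sub_apply] at hx ⊢
    rw [osc]
    linarith

lemma osc_iterate_sub_le (hmono : Monotone P) (hadd : AdditivelyHomogeneous P) (k : ℕ)
    (a b : ι → ℝ) : osc (P^[k] a - P^[k] b) ≤ osc (a - b) := by
  induction k with
  | zero => rfl
  | succ k ih =>
    simp only [Function.iterate_succ_apply']
    exact (osc_apply_sub_le hmono hadd _ _).trans ih

lemma exists_forall_iterate_sub_eq_osc (hmono : Monotone P)
    (hstrict : ∀ f g : ι → ℝ, g ≤ f → ∀ x, g x < f x → P g x < P f x)
    (hadd : AdditivelyHomogeneous P) {a b : ι → ℝ}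
    (hosc : ∀ t, osc (P^[t] a - P^[t] b) = osc (a - b)) :
    ∃ y z, ∀ t, (P^[t] a - P^[t] b) y - (P^[t] a - P^[t] b) z = osc (a - b) := by
  let S : ℕ → Set (ι × ι) := fun t =>
    {q | (P^[t] a - P^[t] b) q.1 - (P^[t] a - P^[t] b) q.2 = osc (a - b)}
  have hS : Antitone S := antitone_nat_of_succ_le fun t q hq => by
    have hPosc : osc (P (P^[t] a) - P (P^[t] b)) = osc (P^[t] a - P^[t] b) := by
      simpa only [Function.iterate_succ_apply'] using (hosc (t + 1)).trans (hosc t).symm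
    change _ = _ at hq ⊢
    rw [← hosc (t + 1)] at hq
    simp only [Function.iterate_succ_apply'] at hq
    rw [← hosc t]
    exact sub_eq_osc_of_apply_sub_eq_osc hmono hstrict hadd hPosc hq
  have hne : ∀ t, (S t).Nonempty := fun t => by
    obtain ⟨y, z, h⟩ := exists_sub_eq_osc (P^[t] a - P^[t] b)
    exact ⟨(y, z), h.trans (hosc t)⟩
  obtain ⟨⟨y, z⟩, h⟩ := exists_forall_mem_of_antitone hS hne
  exact ⟨y, z, h⟩

lemma nat_mul_osc_le_osc_iterate_sub (hmono : Monotone P)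
    (hstrict : ∀ f g : ι → ℝ, g ≤ f → ∀ x, g x < f x → P g x < P f x)
    (hadd : AdditivelyHomogeneous P) {g : ι → ℝ}
    (hosc : ∀ t, osc (P^[t] (P g) - P^[t] g) = osc (P g - g)) (k : ℕ) :
    k * osc (P g - g) ≤ osc (P^[k] g - g) := by
  obtain ⟨y, z, h⟩ := exists_forall_iterate_sub_eq_osc hmono hstrict hadd hosc
  have hstep : ∀ t, (P^[t + 1] g y - P^[t + 1] g z) - (P^[t] g y - P^[t] g z) = osc (P g - g) :=
    fun t => by
      rw [Function.iterate_succ_apply, ← h t]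
      simp only [Pi.sub_apply]
      ring
  calc (k : ℝ) * osc (P g - g) = ∑ t ∈ Finset.range k, osc (P g - g) := by simp
    _ = ∑ t ∈ Finset.range k, ((P^[t + 1] g y - P^[t + 1] g z) - (P^[t] g y - P^[t] g z)) :=
        Finset.sum_congr rfl fun t _ => (hstep t).symm
    _ = (P^[k] g - g) y - (P^[k] g - g) z := by
        rw [Finset.sum_range_sub (fun t => P^[t] g y - P^[t] g z)]
        simp only [Pi.sub_apply, Function.iterate_zero, id]
        ring
    _ ≤ osc (P^[k] g - g) := sub_le_osc _ y z

end TopicalMap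

section NormalizedOrbit

variable {ι : Type*}

def normalizedOrbit (P : (ι → ℝ) → ι → ℝ) (x₀ : ι) (f : ι → ℝ) (n : ℕ) : ι → ℝ :=
  fun x => P^[n] f x - P^[n] f x₀

variable {P : (ι → ℝ) → ι → ℝ}

lemma iterate_normalizedOrbit (hadd : AdditivelyHomogeneous P) (x₀ : ι) (f : ι → ℝ) (k n : ℕ) :
    P^[k] (normalizedOrbit P x₀ f n) = fun x => P^[k + n] f x - P^[n] f x₀ := by
  unfold normalizedOrbit
  rw [iterate_sub_const hadd, Function.iterate_add_apply]

variable [Fintype ι] [Nonempty ι]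

lemma osc_iterate_sub_eq_iInf_of_tendsto (hmono : Monotone P)
    (hadd : AdditivelyHomogeneous P) {x₀ : ι} {f g : ι → ℝ} {φ : ℕ → ℕ} (hφ : StrictMono φ)
    (hacc : Tendsto (fun k => normalizedOrbit P x₀ f (φ k)) atTop (𝓝 g)) (t : ℕ) :
    osc (P^[t] (P g) - P^[t] g) = ⨅ n, osc (P^[n] (P f) - P^[n] f) := by
  set e : ℕ → ℝ := fun n => osc (P^[n] (P f) - P^[n] f)
  have he : Antitone e := antitone_nat_of_succ_le fun n => by
    simp only [e, Function.iterate_succ_apply']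
    exact osc_apply_sub_le hmono hadd _ _
  have hlim : Tendsto e atTop (𝓝 (⨅ n, e n)) :=
    tendsto_atTop_ciInf he ⟨0, by rintro _ ⟨n, rfl⟩; exact osc_nonneg _⟩
  have hP := lipschitzWith_one_of_monotone hmono hadd
  let Φ : (ι → ℝ) → ℝ := fun h => osc (P^[t] (P h) - P^[t] h)
  have hΦ : Continuous Φ := lipschitzWith_osc.continuous.comp
    (((hP.iterate t).continuous.comp hP.continuous).sub (hP.iterate t).continuous)
  have hΦe : ∀ n, Φ (normalizedOrbit P x₀ f n) = e (t + n) := fun n => by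
    simp only [Φ, e, ← Function.iterate_succ_apply, iterate_normalizedOrbit hadd, Nat.succ_add]
    congr 1
    ext x
    exact sub_sub_sub_cancel_right _ _ _
  have hsub : Tendsto (fun k => t + φ k) atTop atTop :=
    tendsto_atTop_mono (fun k => Nat.le_add_left (φ k) t) hφ.tendsto_atTop
  exact tendsto_nhds_unique ((hΦ.tendsto g).comp hacc)
    ((hlim.comp hsub).congr fun k => (hΦe (φ k)).symm)

lemma exists_osc_iterate_sub_lt_of_tendsto (hmono : Monotone P)
    (hadd : AdditivelyHomogeneous P) {x₀ : ι} {f g : ι → ℝ} {φ : ℕ → ℕ} (hφ : StrictMono φ)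
    (hacc : Tendsto (fun k => normalizedOrbit P x₀ f (φ k)) atTop (𝓝 g)) {ε : ℝ} (hε : 0 < ε) :
    ∃ k, 0 < k ∧ osc (P^[k] g - g) < ε := by
  have hsmall := tendsto_osc_sub_of_tendsto hacc
  obtain ⟨i, hi, hi'⟩ : ∃ i, osc (normalizedOrbit P x₀ f (φ i) - g) < ε / 2 ∧
      osc (normalizedOrbit P x₀ f (φ (i + 1)) - g) < ε / 2 :=
    ((hsmall.eventually (gt_mem_nhds (half_pos hε))).and
      (((tendsto_add_atTop_iff_nat 1).2 hsmall).eventually (gt_mem_nhds (half_pos hε)))).exists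
  have hlt : φ i < φ (i + 1) := hφ (Nat.lt_succ_self i)
  set h := normalizedOrbit P x₀ f (φ i)
  set k := φ (i + 1) - φ i
  have hshift : osc (P^[k] h - g) = osc (normalizedOrbit P x₀ f (φ (i + 1)) - g) :=
    osc_eq_of_forall_eq_add (c := P^[φ (i + 1)] f x₀ - P^[φ i] f x₀) fun x => by
      simp only [h, k, Pi.sub_apply, iterate_normalizedOrbit hadd, normalizedOrbit,
        Nat.sub_add_cancel hlt.le]
      ring
  refine ⟨k, Nat.sub_pos_of_lt hlt, ?_⟩
  calc osc (P^[k] g - g) ≤ osc (P^[k] g - P^[k] h) + osc (P^[k] h - g) := by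
        simpa only [sub_add_sub_cancel] using osc_add_le (P^[k] g - P^[k] h) (P^[k] h - g)
    _ ≤ osc (h - g) + osc (normalizedOrbit P x₀ f (φ (i + 1)) - g) := by
        rw [hshift, osc_sub_comm h g]
        exact add_le_add_left (osc_iterate_sub_le hmono hadd k g h) _
    _ < ε := by linarith

lemma tendsto_normalizedOrbit_of_osc_sub_eq_zero (hmono : Monotone P)
    (hadd : AdditivelyHomogeneous P) {x₀ : ι} {f g : ι → ℝ} {φ : ℕ → ℕ} (hφ : StrictMono φ)
    (hacc : Tendsto (fun k => normalizedOrbit P x₀ f (φ k)) atTop (𝓝 g))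
    (hfix : osc (P g - g) = 0) :
    Tendsto (normalizedOrbit P x₀ f) atTop (𝓝 g) := by
  set s : ℕ → ℝ := fun n => osc (normalizedOrbit P x₀ f n - g)
  have hs : Antitone s := antitone_nat_of_succ_le fun n => by
    have hPg := apply_eq_of_osc_eq_zero hfix
    have : s (n + 1) = osc (P (normalizedOrbit P x₀ f n) - P g) :=
      osc_eq_of_forall_eq_add (c := P^[n] f x₀ - P^[n + 1] f x₀ + (P g x₀ - g x₀)) fun x => by
        have hx := hPg x x₀
        have h1 := congrFun (iterate_normalizedOrbit hadd x₀ f 1 n) x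
        simp only [Pi.sub_apply, Function.iterate_one] at hx h1 ⊢
        rw [h1, Nat.add_comm 1 n, normalizedOrbit]
        linarith
    rw [this]
    exact osc_apply_sub_le hmono hadd _ _
  have hlim := tendsto_atTop_ciInf hs ⟨0, by rintro _ ⟨n, rfl⟩; exact osc_nonneg _⟩
  have h0 : ⨅ n, s n = 0 :=
    tendsto_nhds_unique (hlim.comp hφ.tendsto_atTop) (tendsto_osc_sub_of_tendsto hacc)
  have hg0 : g x₀ = 0 :=
    tendsto_nhds_unique (((continuous_apply x₀).tendsto g).comp hacc)
      (by simp [Function.comp_def, normalizedOrbit])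
  rw [h0] at hlim
  refine tendsto_iff_norm_sub_tendsto_zero.2 (squeeze_zero (fun n => norm_nonneg _)
    (fun n => norm_le_osc_of_apply_eq_zero (x₀ := x₀) ?_) hlim)
  simp [normalizedOrbit, hg0]

end NormalizedOrbit

theorem stmt1_general (N : ℕ) (x₀ : Fin N) (P : (Fin N → ℝ) → (Fin N → ℝ))
    (mono : ∀ f g : Fin N → ℝ, (∀ x, g x ≤ f x) → ∀ x, P g x ≤ P f x)
    (smono : ∀ f g : Fin N → ℝ, (∀ x, g x ≤ f x) → ∀ x, g x < f x → P g x < P f x)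
    (cadd : ∀ (f : Fin N → ℝ) (c : ℝ), P (fun x => f x + c) = fun x => P f x + c)
    (f g : Fin N → ℝ) (φ : ℕ → ℕ) (hφ : StrictMono φ)
    (hacc : Tendsto (fun k => fun x => P^[φ k] f x - P^[φ k] f x₀) atTop (nhds g)) :
    Tendsto (fun n => fun x => P^[n] f x - P^[n] f x₀) atTop (nhds g) := by
  have : Nonempty (Fin N) := ⟨x₀⟩
  have hmono : Monotone P := fun a b hab => mono b a hab
  have hosc : ∀ t, osc (P^[t] (P g) - P^[t] g) = osc (P g - g) := fun t =>
    (osc_iterate_sub_eq_iInf_of_tendsto hmono cadd hφ hacc t).trans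
      (osc_iterate_sub_eq_iInf_of_tendsto hmono cadd hφ hacc 0).symm
  have hfix : osc (P g - g) = 0 := by
    by_contra hne
    obtain ⟨k, hk, hlt⟩ := exists_osc_iterate_sub_lt_of_tendsto hmono cadd hφ hacc
      ((osc_nonneg _).lt_of_ne' hne)
    have hgrowth := nat_mul_osc_le_osc_iterate_sub hmono smono cadd hosc k
    have hk' : (1 : ℝ) ≤ k := Nat.one_le_cast.2 hk
    linarith [le_mul_of_one_le_left (osc_nonneg (P g - g)) hk']
  exact tendsto_normalizedOrbit_of_osc_sub_eq_zero hmono cadd hφ hacc hfix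

theorem stmt1 (N : ℕ) (hN : 1 ≤ N) (x₀ : Fin N) (P : (Fin N → ℝ) → (Fin N → ℝ))
    (mono : ∀ f g : Fin N → ℝ, (∀ x, g x ≤ f x) → ∀ x, P g x ≤ P f x)
    (smono : ∀ f g : Fin N → ℝ, (∀ x, g x ≤ f x) → ∀ x, g x < f x → P g x < P f x)
    (cadd : ∀ (f : Fin N → ℝ) (c : ℝ), P (fun x => f x + c) = fun x => P f x + c)
    (f g : Fin N → ℝ) (φ : ℕ → ℕ) (hφ : StrictMono φ)
    (hacc : Tendsto (fun k => fun x => P^[φ k] f x - P^[φ k] f x₀) atTop (nhds g)) :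
    Tendsto (fun n => fun x => P^[n] f x - P^[n] f x₀) atTop (nhds g) :=
  stmt1_general N x₀ P mono smono cadd f g φ hφ hacc
end

section
/- Let Ω ⊆ ℝ^N be a nonempty closed set satisfying Ω + c·𝟙 = Ω for all c ∈ ℝ, and let P : Ω → Ω satisfy uniform strict monotonicity with constant ε₀ > 0 and constant additivity. Then there exists a map P̄ : ℝ^N → ℝ^N with P̄ = P on Ω such that P̄ satisfies uniform strict monotonicity with the same constant ε₀ and constant additivity. -/
theorem stmt5 (N : ℕ) (Ω : Set (Fin N → ℝ)) (hne : Ω.Nonempty) (hcl : IsClosed Ω)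
    (hinv : ∀ f ∈ Ω, ∀ c : ℝ, (fun x => f x + c) ∈ Ω)
    (P : (Fin N → ℝ) → (Fin N → ℝ)) (hmap : ∀ f ∈ Ω, P f ∈ Ω)
    (ε₀ : ℝ) (hε₀ : 0 < ε₀)
    (husm : ∀ f ∈ Ω, ∀ g ∈ Ω, (∀ x, g x ≤ f x) → ∀ x, P g x + ε₀ * (f x - g x) ≤ P f x)
    (hca : ∀ f ∈ Ω, ∀ c : ℝ, P (fun x => f x + c) = fun x => P f x + c) :
    ∃ Pbar : (Fin N → ℝ) → (Fin N → ℝ),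
      (∀ f ∈ Ω, Pbar f = P f) ∧
      (∀ f g : Fin N → ℝ, (∀ x, g x ≤ f x) → ∀ x, Pbar g x + ε₀ * (f x - g x) ≤ Pbar f x) ∧
      (∀ (f : Fin N → ℝ) (c : ℝ), Pbar (fun x => f x + c) = fun x => Pbar f x + c) := by
  rcases Nat.eq_zero_or_pos N with hN | hN
  · subst hN
    exact ⟨P, fun f _ => rfl, fun f g _ x => x.elim0, fun f c => funext fun x => x.elim0⟩
  haveI : Nonempty (Fin N) := ⟨⟨0, hN⟩⟩
  obtain ⟨h₀, hh₀⟩ := hne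
  set S : (Fin N → ℝ) → Fin N → Set ℝ := fun f x =>
    {y | ∃ g, g ∈ Ω ∧ (∀ z, g z ≤ f z) ∧ y = P g x + ε₀ * (f x - g x)} with hSdef
  have hSne : ∀ f x, (S f x).Nonempty := by
    intro f x
    refine ⟨_, fun z => h₀ z + (⨅ z, (f z - h₀ z)), hinv h₀ hh₀ _, fun z => ?_, rfl⟩
    have h1 : (⨅ z, (f z - h₀ z)) ≤ f z - h₀ z :=
      ciInf_le (f := fun z => f z - h₀ z) (Set.Finite.bddBelow (Set.finite_range _)) z
    show h₀ z + (⨅ z, (f z - h₀ z)) ≤ f z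
    linarith
  have hSbdd : ∀ f x, BddAbove (S f x) := by
    intro f x
    set M := ⨆ z, (f z - h₀ z) with hM
    have hMmem : (fun z => h₀ z + M) ∈ Ω := hinv h₀ hh₀ M
    have hfM : ∀ z, f z ≤ h₀ z + M := by
      intro z
      rw [hM]
      have : f z - h₀ z ≤ ⨆ z, (f z - h₀ z) :=
        le_ciSup (f := fun z => f z - h₀ z) (Set.Finite.bddAbove (Set.finite_range _)) z
      linarith
    refine ⟨P (fun z => h₀ z + M) x, ?_⟩
    rintro y ⟨g, hg, hgle, rfl⟩
    have h1 := husm (fun z => h₀ z + M) hMmem g hg (fun z => (hgle z).trans (hfM z)) x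
    have h2 : f x ≤ h₀ x + M := hfM x
    nlinarith
  refine ⟨fun f x => sSup (S f x), ?_, ?_, ?_⟩
  · intro f hf
    funext x
    apply le_antisymm
    · apply csSup_le (hSne f x)
      rintro y ⟨g, hg, hgle, rfl⟩
      have := husm f hf g hg hgle x
      linarith
    · exact le_csSup (hSbdd f x) ⟨f, hf, fun z => le_refl _, by ring⟩
  · intro f g hle x
    have key : sSup (S g x) ≤ sSup (S f x) - ε₀ * (f x - g x) := by
      apply csSup_le (hSne g x)
      rintro y ⟨h, hh, hhle, rfl⟩
      have hmem : P h x + ε₀ * (f x - h x) ∈ S f x :=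
        ⟨h, hh, fun z => (hhle z).trans (hle z), rfl⟩
      have := le_csSup (hSbdd f x) hmem
      linarith
    linarith
  · intro f c
    funext x
    apply le_antisymm
    · apply csSup_le (hSne _ x)
      rintro y ⟨g, hg, hgle, rfl⟩
      have hh : (fun z => g z - c) ∈ Ω := by
        have := hinv g hg (-c)
        simpa [sub_eq_add_neg] using this
      have hPg : P g = fun z => P (fun z => g z - c) z + c := by
        have := hca (fun z => g z - c) hh c
        simpa using this
      have hmem : P (fun z => g z - c) x + ε₀ * (f x - (g x - c)) ∈ S f x := by
        refine ⟨_, hh, fun z => ?_, rfl⟩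
        have := hgle z
        simp only at this ⊢
        linarith
      have hle' := le_csSup (hSbdd f x) hmem
      rw [hPg]
      simp only
      linarith
    · have key : sSup (S f x) ≤ sSup (S (fun z => f z + c) x) - c := by
        apply csSup_le (hSne f x)
        rintro y ⟨g, hg, hgle, rfl⟩
        have hmem : P (fun z => g z + c) x + ε₀ * ((f x + c) - (g x + c)) ∈
            S (fun z => f z + c) x := by
          refine ⟨_, hinv g hg c, fun z => ?_, rfl⟩
          simp only
          have := hgle z
          linarith
        have hle' := le_csSup (hSbdd _ x) hmem
        rw [hca g hg c] at hle'
        simp only at hle'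
        linarith
      linarith
end

section
/- Let P : ℝ^N → ℝ^N satisfy strict monotonicity and constant additivity, and for h ∈ ℝ^N set λ₊(h) := max_x (Ph(x) − h(x)). If f ∈ ℝ^N satisfies λ₊(Pf) = λ₊(f), then every maximizer of P(Pf) − Pf is a maximizer of Pf − f; that is, {x : P²f(x) − Pf(x) = λ₊(Pf)} ⊆ {x : Pf(x) − f(x) = λ₊(f)}. -/
theorem stmt8 (N : ℕ) [NeZero N] (P : (Fin N → ℝ) → (Fin N → ℝ))
    (smono : ∀ f g : Fin N → ℝ, (∀ x, g x ≤ f x) → ∀ x, g x < f x → P g x < P f x)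
    (cadd : ∀ (f : Fin N → ℝ) (c : ℝ), P (fun x => f x + c) = fun x => P f x + c)
    (lamPlus : (Fin N → ℝ) → ℝ)
    (hlam : ∀ h : Fin N → ℝ, IsGreatest (Set.range fun x => P h x - h x) (lamPlus h))
    (f : Fin N → ℝ) (heq : lamPlus (P f) = lamPlus f) :
    {x : Fin N | P (P f) x - P f x = lamPlus (P f)} ⊆
      {x : Fin N | P f x - f x = lamPlus f} := by
  intro x hx
  simp only [Set.mem_setOf_eq] at hx ⊢
  by_contra hne
  have hub : ∀ y, P f y - f y ≤ lamPlus f :=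
    fun y => (hlam f).2 ⟨y, rfl⟩
  have hlt : P f x - f x < lamPlus f := lt_of_le_of_ne (hub x) hne
  set g : Fin N → ℝ := fun y => f y + lamPlus f with hg
  have hge : ∀ y, P f y ≤ g y := fun y => by
    have := hub y; simp [hg]; linarith
  have hgx : P f x < g x := by simp [hg]; linarith
  have := smono g (P f) hge x hgx
  rw [cadd f (lamPlus f)] at this
  simp only [] at this
  have : P (P f) x - P f x < lamPlus f := by linarith
  rw [hx, heq] at this
  exact lt_irrefl _ this
end

section
/- There exist a map P : ℝ⁴ → ℝ⁴ satisfying uniform strict monotonicity with constant ε₀ = 1/2 and constant additivity, a vector f ∈ ℝ⁴, and two coordinates x₃, x₄ such that the real sequence n ↦ P^n f(x₃) − P^n f(x₄) does not converge (in fact it oscillates between two distinct values, so it does not converge even in [−∞, +∞]). -/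
open Filter

noncomputable section StmtTen

/-- The desired orbit. -/
def FF (n : ℕ) : Fin 4 → ℝ := ![8 * n, -(8 * n), (-1) ^ n, -((-1) ^ n)]

/-- The forced value of `N` along the orbit. -/
def CC (x : Fin 4) (n : ℕ) : ℝ := 2 * FF (n + 1) x - FF n x

/-- `min_y (g y - FF n y)`. -/
def mm (g : Fin 4 → ℝ) (n : ℕ) : ℝ :=
  min (min (g 0 - FF n 0) (g 1 - FF n 1)) (min (g 2 - FF n 2) (g 3 - FF n 3))

/-- The canonical topical extension. -/
def NN (g : Fin 4 → ℝ) (x : Fin 4) : ℝ := ⨆ n : ℕ, (CC x n + mm g n)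

def PP (g : Fin 4 → ℝ) : Fin 4 → ℝ := fun x => (g x + NN g x) / 2

lemma FF0 (n : ℕ) : FF n 0 = 8 * n := rfl
lemma FF1 (n : ℕ) : FF n 1 = -(8 * n) := rfl
lemma FF2 (n : ℕ) : FF n 2 = (-1) ^ n := rfl
lemma FF3 (n : ℕ) : FF n 3 = -((-1) ^ n) := rfl

lemma CC0 (n : ℕ) : CC 0 n = 8 * n + 16 := by
  simp [CC, FF0]; ring
lemma CC1 (n : ℕ) : CC 1 n = -(8 * n) - 16 := by
  simp [CC, FF1]; ring
lemma CC2 (n : ℕ) : CC 2 n = -3 * (-1) ^ n := by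
  simp [CC, FF2, pow_succ]; ring
lemma CC3 (n : ℕ) : CC 3 n = 3 * (-1) ^ n := by
  simp [CC, FF3, pow_succ]; ring

lemma CC_le (x : Fin 4) (n : ℕ) : CC x n ≤ 8 * n + 16 := by
  have hn : (0:ℝ) ≤ (n : ℝ) := Nat.cast_nonneg n
  fin_cases x
  · show CC 0 n ≤ 8 * n + 16
    rw [CC0]
  · show CC 1 n ≤ 8 * n + 16
    rw [CC1]; linarith
  · show CC 2 n ≤ 8 * n + 16
    rw [CC2]; rcases neg_one_pow_eq_or ℝ n with h | h <;> rw [h] <;> linarith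
  · show CC 3 n ≤ 8 * n + 16
    rw [CC3]; rcases neg_one_pow_eq_or ℝ n with h | h <;> rw [h] <;> linarith

lemma mm_le0 (g : Fin 4 → ℝ) (n : ℕ) : mm g n ≤ g 0 - FF n 0 :=
  le_trans (min_le_left _ _) (min_le_left _ _)
lemma mm_le1 (g : Fin 4 → ℝ) (n : ℕ) : mm g n ≤ g 1 - FF n 1 :=
  le_trans (min_le_left _ _) (min_le_right _ _)

lemma bddNN (g : Fin 4 → ℝ) (x : Fin 4) :
    BddAbove (Set.range fun n : ℕ => CC x n + mm g n) := by
  refine ⟨g 0 + 16, ?_⟩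
  rintro _ ⟨n, rfl⟩
  have h1 := CC_le x n
  have h2 := mm_le0 g n
  rw [FF0] at h2
  have hn : (0:ℝ) ≤ (n : ℝ) := Nat.cast_nonneg n
  show CC x n + mm g n ≤ g 0 + 16
  linarith

lemma mm_mono {g f : Fin 4 → ℝ} (h : ∀ y, g y ≤ f y) (n : ℕ) : mm g n ≤ mm f n := by
  unfold mm
  gcongr <;> [exact h 0; exact h 1; exact h 2; exact h 3]

lemma le_NN (g : Fin 4 → ℝ) (x : Fin 4) (n : ℕ) : CC x n + mm g n ≤ NN g x :=
  le_ciSup (bddNN g x) n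

lemma NN_mono {g f : Fin 4 → ℝ} (h : ∀ y, g y ≤ f y) (x : Fin 4) : NN g x ≤ NN f x := by
  refine ciSup_le fun n => ?_
  exact le_trans (by have := mm_mono h n; linarith) (le_NN f x n)

lemma mm_add (g : Fin 4 → ℝ) (c : ℝ) (n : ℕ) :
    mm (fun y => g y + c) n = mm g n + c := by
  unfold mm
  simp only [add_sub_right_comm, min_add_add_right]

lemma NN_add (g : Fin 4 → ℝ) (c : ℝ) (x : Fin 4) :
    NN (fun y => g y + c) x = NN g x + c := by
  apply le_antisymm
  · refine ciSup_le fun n => ?_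
    rw [mm_add]
    have := le_NN g x n
    linarith
  · have h : NN g x ≤ NN (fun y => g y + c) x - c := by
      refine ciSup_le fun n => ?_
      have := le_NN (fun y => g y + c) x n
      rw [mm_add] at this
      linarith
    linarith

lemma mm_self (n : ℕ) : mm (FF n) n = 0 := by
  unfold mm; simp

/-- For `k ≠ n`, one of the clock coordinates forces `mm (FF n) k ≤ -8`. -/
lemma mm_FF_ne {n k : ℕ} (hkn : k ≠ n) : mm (FF n) k ≤ -8 := by
  rcases lt_or_gt_of_ne hkn with hlt | hgt
  · have h := mm_le1 (FF n) k
    rw [FF1, FF1] at h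
    have : (k:ℝ) + 1 ≤ (n:ℝ) := by exact_mod_cast hlt
    linarith
  · have h := mm_le0 (FF n) k
    rw [FF0, FF0] at h
    have : (n:ℝ) + 1 ≤ (k:ℝ) := by exact_mod_cast hgt
    linarith

lemma NN_FF (n : ℕ) (x : Fin 4) : NN (FF n) x = CC x n := by
  apply le_antisymm
  · refine ciSup_le fun k => ?_
    rcases eq_or_ne k n with rfl | hkn
    · rw [mm_self]; linarith
    · fin_cases x
      · show CC 0 k + mm (FF n) k ≤ CC 0 n
        have h := mm_le0 (FF n) k
        rw [FF0, FF0] at h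
        rw [CC0, CC0]
        linarith
      · show CC 1 k + mm (FF n) k ≤ CC 1 n
        have h := mm_le1 (FF n) k
        rw [FF1, FF1] at h
        rw [CC1, CC1]
        linarith
      · show CC 2 k + mm (FF n) k ≤ CC 2 n
        have h8 := mm_FF_ne hkn
        rw [CC2, CC2]
        rcases neg_one_pow_eq_or ℝ k with hk | hk <;>
          rcases neg_one_pow_eq_or ℝ n with hn | hn <;>
            rw [hk, hn] <;> linarith
      · show CC 3 k + mm (FF n) k ≤ CC 3 n
        have h8 := mm_FF_ne hkn
        rw [CC3, CC3]
        rcases neg_one_pow_eq_or ℝ k with hk | hk <;>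
          rcases neg_one_pow_eq_or ℝ n with hn | hn <;>
            rw [hk, hn] <;> linarith
  · have := le_NN (FF n) x n
    rw [mm_self] at this
    linarith

lemma PP_FF (n : ℕ) : PP (FF n) = FF (n + 1) := by
  funext x
  rw [PP, NN_FF, CC]
  ring

lemma PP_iter (n : ℕ) : PP^[n] (FF 0) = FF n := by
  induction n with
  | zero => rfl
  | succ k ih => rw [Function.iterate_succ_apply', ih, PP_FF]

end StmtTen

theorem stmt10 :
    ∃ P : (Fin 4 → ℝ) → (Fin 4 → ℝ),
      (∀ f g : Fin 4 → ℝ, (∀ x, g x ≤ f x) → ∀ x, P g x + (1 / 2 : ℝ) * (f x - g x) ≤ P f x) ∧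
      (∀ (f : Fin 4 → ℝ) (c : ℝ), P (fun x => f x + c) = fun x => P f x + c) ∧
      ∃ (f : Fin 4 → ℝ) (x₃ x₄ : Fin 4),
        ¬ ∃ L : EReal, Tendsto (fun n : ℕ => ((P^[n] f x₃ - P^[n] f x₄ : ℝ) : EReal))
            atTop (nhds L) := by
  refine ⟨PP, ?_, ?_, FF 0, 2, 3, ?_⟩
  · intro f g hgf x
    have := NN_mono hgf x
    unfold PP
    linarith
  · intro f c
    funext x
    unfold PP
    rw [NN_add]
    ring
  · rintro ⟨L, hL⟩
    have hdiff : ∀ n : ℕ, (PP^[n] (FF 0) 2 - PP^[n] (FF 0) 3 : ℝ) = 2 * (-1) ^ n := by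
      intro n
      rw [PP_iter, FF2, FF3]
      ring
    have heven_fn : ∀ k : ℕ, (PP^[2 * k] (FF 0) 2 - PP^[2 * k] (FF 0) 3 : ℝ) = 2 := by
      intro k
      rw [hdiff, pow_mul]
      norm_num
    have hodd_fn : ∀ k : ℕ, (PP^[2 * k + 1] (FF 0) 2 - PP^[2 * k + 1] (FF 0) 3 : ℝ) = -2 := by
      intro k
      rw [hdiff, pow_succ, pow_mul]
      norm_num
    have h2k : Tendsto (fun k : ℕ => 2 * k) atTop atTop :=
      tendsto_atTop_atTop.mpr fun b => ⟨b, fun a ha => by omega⟩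
    have h2k1 : Tendsto (fun k : ℕ => 2 * k + 1) atTop atTop :=
      tendsto_atTop_atTop.mpr fun b => ⟨b, fun a ha => by omega⟩
    have heven' : Tendsto (fun _ : ℕ => ((2 : ℝ) : EReal)) atTop (nhds L) := by
      refine (hL.comp h2k).congr fun k => ?_
      rw [Function.comp_apply]
      exact congrArg Real.toEReal (heven_fn k)
    have hodd' : Tendsto (fun _ : ℕ => ((-2 : ℝ) : EReal)) atTop (nhds L) := by
      refine (hL.comp h2k1).congr fun k => ?_
      rw [Function.comp_apply]
      exact congrArg Real.toEReal (hodd_fn k)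
    have a1 : L = ((2 : ℝ) : EReal) := tendsto_nhds_unique heven' tendsto_const_nhds
    have a2 : L = ((-2 : ℝ) : EReal) := tendsto_nhds_unique hodd' tendsto_const_nhds
    have : (2 : ℝ) = -2 := EReal.coe_eq_coe_iff.mp (a1.symm.trans a2)
    norm_num at this
end

section
/- Let N ≥ 1 and let Λ : ℝ^N → ℝ^N be a map such that Λ maps the open positive orthant (0,∞)^N into itself, Λ(αv) = αΛ(v) for all α ≥ 0 and all v in the positive orthant, and Λ(u) ≤ Λ(v) (pointwise) whenever u ≤ v pointwise with u, v in the positive orthant. Define P : ℝ^N → ℝ^N by Pf := (1/2)·(f + log Λ(exp f)), where exp and log are applied coordinatewise. Fix a coordinate x₀. If for some f ∈ ℝ^N the sequence f_n := P^n f − P^n f(x₀)·𝟙 has a finite accumulation point g ∈ ℝ^N, then f_n → g in the sup norm as n → ∞. -/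
open Filter

theorem aux_sup_diff {α : Type*} {s : Finset α} (hs : s.Nonempty) (p q : α → ℝ) (M : ℝ)
    (h : ∀ x ∈ s, |p x - q x| ≤ M) : |s.sup' hs p - s.sup' hs q| ≤ M := by
  have h1 : ∀ (p q : α → ℝ), (∀ x ∈ s, |p x - q x| ≤ M) → s.sup' hs p ≤ s.sup' hs q + M := by
    intro p q h
    apply Finset.sup'_le
    intro x hx
    have h2 := (abs_le.1 (h x hx)).2
    have h3 := Finset.le_sup' q hx
    linarith
  have hpq := h1 p q h
  have hqp := h1 q p (fun x hx => by rw [abs_sub_comm]; exact h x hx)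
  rw [abs_le]; constructor <;> linarith

theorem aux_inf_diff {α : Type*} {s : Finset α} (hs : s.Nonempty) (p q : α → ℝ) (M : ℝ)
    (h : ∀ x ∈ s, |p x - q x| ≤ M) : |s.inf' hs p - s.inf' hs q| ≤ M := by
  have h1 : ∀ (p q : α → ℝ), (∀ x ∈ s, |p x - q x| ≤ M) → s.inf' hs p ≤ s.inf' hs q + M := by
    intro p q h
    obtain ⟨x, hx, hx2⟩ := Finset.exists_mem_eq_inf' hs q
    have h2 := (abs_le.1 (h x hx)).2
    have h3 := Finset.inf'_le p hx
    rw [hx2]; linarith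
  have hpq := h1 p q h
  have hqp := h1 q p (fun x hx => by rw [abs_sub_comm]; exact h x hx)
  rw [abs_le]; constructor <;> linarith

theorem stmt11 (N : ℕ) (hN : 1 ≤ N) (x₀ : Fin N)
    (Λ : (Fin N → ℝ) → (Fin N → ℝ))
    (hpos : ∀ v : Fin N → ℝ, (∀ x, 0 < v x) → ∀ x, 0 < Λ v x)
    (hhom : ∀ α : ℝ, 0 ≤ α → ∀ v : Fin N → ℝ, (∀ x, 0 < v x) →
      Λ (fun x => α * v x) = fun x => α * Λ v x)
    (hmono : ∀ u v : Fin N → ℝ, (∀ x, 0 < u x) → (∀ x, 0 < v x) →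
      (∀ x, u x ≤ v x) → ∀ x, Λ u x ≤ Λ v x)
    (P : (Fin N → ℝ) → (Fin N → ℝ))
    (hP : ∀ f : Fin N → ℝ,
      P f = fun x => (f x + Real.log (Λ (fun y => Real.exp (f y)) x)) / 2)
    (f g : Fin N → ℝ) (φ : ℕ → ℕ) (hφ : StrictMono φ)
    (hacc : Tendsto (fun k => fun x => P^[φ k] f x - P^[φ k] f x₀) atTop (nhds g)) :
    Tendsto (fun n => fun x => P^[n] f x - P^[n] f x₀) atTop (nhds g) := by
  haveI hNE : Nonempty (Fin N) := ⟨⟨0, Nat.lt_of_lt_of_le Nat.zero_lt_one hN⟩⟩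
  have ne' : (Finset.univ : Finset (Fin N)).Nonempty := Finset.univ_nonempty
  -- Key inequality for Q = log ∘ Λ ∘ exp
  have hQkey : ∀ (u v : Fin N → ℝ) (M : ℝ), (∀ x, u x ≤ v x + M) →
      ∀ x, Real.log (Λ (fun y => Real.exp (u y)) x) ≤
        Real.log (Λ (fun y => Real.exp (v y)) x) + M := by
    intro u v M huv x
    have hpu : ∀ y, (0:ℝ) < Real.exp (u y) := fun y => Real.exp_pos _
    have hpv : ∀ y, (0:ℝ) < Real.exp (v y) := fun y => Real.exp_pos _
    have hpv' : ∀ y, (0:ℝ) < Real.exp M * Real.exp (v y) :=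
      fun y => mul_pos (Real.exp_pos M) (hpv y)
    have hle : ∀ y, Real.exp (u y) ≤ Real.exp M * Real.exp (v y) := by
      intro y
      rw [← Real.exp_add]
      exact Real.exp_le_exp.mpr (by linarith [huv y])
    have hm := hmono _ _ hpu hpv' hle x
    have hh : Λ (fun y => Real.exp M * Real.exp (v y)) x
        = Real.exp M * Λ (fun y => Real.exp (v y)) x := by
      have := congrFun (hhom (Real.exp M) (Real.exp_pos M).le (fun y => Real.exp (v y)) hpv) x
      simpa using this
    rw [hh] at hm
    have h1 : 0 < Λ (fun y => Real.exp (u y)) x := hpos _ hpu x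
    have h2 : 0 < Λ (fun y => Real.exp (v y)) x := hpos _ hpv x
    calc Real.log (Λ (fun y => Real.exp (u y)) x)
        ≤ Real.log (Real.exp M * Λ (fun y => Real.exp (v y)) x) := Real.log_le_log h1 hm
      _ = Real.log (Λ (fun y => Real.exp (v y)) x) + M := by
          rw [Real.log_mul (Real.exp_ne_zero M) (ne_of_gt h2), Real.log_exp]; ring
  have hPkey : ∀ (u v : Fin N → ℝ) (M : ℝ), (∀ x, u x ≤ v x + M) →
      ∀ x, P u x ≤ P v x + M := by
    intro u v M huv x
    have hq := hQkey u v M huv x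
    have e1 : P u x = (u x + Real.log (Λ (fun y => Real.exp (u y)) x))/2 := by rw [hP]
    have e2 : P v x = (v x + Real.log (Λ (fun y => Real.exp (v y)) x))/2 := by rw [hP]
    rw [e1, e2]; linarith [huv x]
  have hPit : ∀ (j : ℕ) (u v : Fin N → ℝ) (M : ℝ), (∀ x, u x ≤ v x + M) →
      ∀ x, P^[j] u x ≤ P^[j] v x + M := by
    intro j
    induction j with
    | zero => intro u v M h x; simpa using h x
    | succ n ih =>
      intro u v M h x
      rw [Function.iterate_succ_apply, Function.iterate_succ_apply]
      exact ih (P u) (P v) M (fun y => hPkey u v M h y) x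
  have hPconst : ∀ (c : ℝ) (u : Fin N → ℝ) (x : Fin N), P (fun y => u y + c) x = P u x + c := by
    intro c u x
    have h1 := hPkey (fun y => u y + c) u c (fun y => le_rfl) x
    have h2 := hPkey u (fun y => u y + c) (-c) (fun y => by show u y ≤ u y + c + -c; linarith) x
    linarith
  have hPitconst : ∀ (j : ℕ) (c : ℝ) (u : Fin N → ℝ) (x : Fin N),
      P^[j] (fun y => u y + c) x = P^[j] u x + c := by
    intro j
    induction j with
    | zero => intro c u x; simp
    | succ n ih =>
      intro c u x
      rw [Function.iterate_succ_apply, Function.iterate_succ_apply]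
      have hfe : P (fun y => u y + c) = fun y => P u y + c := funext (fun y => hPconst c u y)
      rw [hfe]
      exact ih c (P u) x
  -- increment extrema
  obtain ⟨a, ha⟩ : ∃ a : ℕ → ℝ, ∀ n, a n =
      Finset.univ.sup' ne' (fun x => P^[n+1] f x - P^[n] f x) := ⟨_, fun _ => rfl⟩
  obtain ⟨b, hb⟩ : ∃ b : ℕ → ℝ, ∀ n, b n =
      Finset.univ.inf' ne' (fun x => P^[n+1] f x - P^[n] f x) := ⟨_, fun _ => rfl⟩
  have hupper : ∀ n x, P^[n+1] f x ≤ P^[n] f x + a n := by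
    intro n x
    have h1 : P^[n+1] f x - P^[n] f x
        ≤ Finset.univ.sup' ne' (fun x => P^[n+1] f x - P^[n] f x) :=
      Finset.le_sup' (fun x => P^[n+1] f x - P^[n] f x) (Finset.mem_univ x)
    rw [← ha n] at h1; linarith
  have hlower : ∀ n x, P^[n] f x ≤ P^[n+1] f x + -(b n) := by
    intro n x
    have h1 : Finset.univ.inf' ne' (fun x => P^[n+1] f x - P^[n] f x)
        ≤ P^[n+1] f x - P^[n] f x := Finset.inf'_le _ (Finset.mem_univ x)
    rw [← hb n] at h1; linarith
  have haa : ∀ n, a (n+1) ≤ a n := by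
    intro n
    rw [ha (n+1)]
    apply Finset.sup'_le
    intro x _
    have h2 := hPkey _ _ _ (hupper n) x
    rw [← Function.iterate_succ_apply' P (n+1) f, ← Function.iterate_succ_apply' P n f] at h2
    linarith
  have hbb : ∀ n, b n ≤ b (n+1) := by
    intro n
    have h3 : Finset.univ.inf' ne' (fun x => P^[n+1+1] f x - P^[n+1] f x) ≥ b n := by
      apply Finset.le_inf'
      intro x _
      have h2 := hPkey _ _ _ (hlower n) x
      rw [← Function.iterate_succ_apply' P (n+1) f, ← Function.iterate_succ_apply' P n f] at h2
      linarith
    rw [hb (n+1)]; exact h3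
  have hba : ∀ n, b n ≤ a n := by
    intro n
    have h1 := hupper n x₀
    have h2 := hlower n x₀
    linarith
  have hamono : Antitone a := antitone_nat_of_succ_le haa
  have hbmono : Monotone b := monotone_nat_of_le_succ hbb
  obtain ⟨A, hA⟩ : ∃ A, Tendsto a atTop (nhds A) := by
    refine ⟨_, tendsto_atTop_ciInf hamono ⟨b 0, ?_⟩⟩
    rintro y ⟨n, rfl⟩
    exact le_trans (hbmono (Nat.zero_le n)) (hba n)
  obtain ⟨B, hB⟩ : ∃ B, Tendsto b atTop (nhds B) := by
    refine ⟨_, tendsto_atTop_ciSup hbmono ⟨a 0, ?_⟩⟩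
    rintro y ⟨n, rfl⟩
    exact le_trans (hba n) (hamono (Nat.zero_le n))
  -- coordinatewise convergence of the subsequence
  have hcoord : ∀ x, Tendsto (fun k => P^[φ k] f x - P^[φ k] f x₀) atTop (nhds (g x)) := by
    intro x
    exact ((continuous_apply x).tendsto g).comp hacc
  have hgx₀ : g x₀ = 0 := by
    refine tendsto_nhds_unique (hcoord x₀) ?_
    simp only [sub_self]
    exact tendsto_const_nhds
  obtain ⟨ε, hε⟩ : ∃ ε : ℕ → ℝ, ∀ k, ε k =
      Finset.univ.sup' ne' (fun x => |P^[φ k] f x - P^[φ k] f x₀ - g x|) := ⟨_, fun _ => rfl⟩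
  have hε0 : ∀ k, 0 ≤ ε k := by
    intro k
    rw [hε k]
    exact le_trans (abs_nonneg _) (Finset.le_sup' (fun x => |P^[φ k] f x - P^[φ k] f x₀ - g x|) (Finset.mem_univ x₀))
  have hεlim : Tendsto ε atTop (nhds 0) := by
    have hsum : Tendsto (fun k => ∑ x : Fin N, |P^[φ k] f x - P^[φ k] f x₀ - g x|)
        atTop (nhds 0) := by
      have h0 : Tendsto (fun k => ∑ x : Fin N, |P^[φ k] f x - P^[φ k] f x₀ - g x|)
          atTop (nhds (∑ _x : Fin N, (0:ℝ))) := by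
        apply tendsto_finset_sum
        intro x _
        simpa using ((hcoord x).sub_const (g x)).abs
      simpa using h0
    apply squeeze_zero hε0 ?_ hsum
    intro k
    rw [hε k]
    apply Finset.sup'_le
    intro x _
    exact Finset.single_le_sum (f := fun x => |P^[φ k] f x - P^[φ k] f x₀ - g x|) (fun i _ => abs_nonneg _) (Finset.mem_univ x)
  -- shadowing estimate
  have hE : ∀ k j x, |P^[j + φ k] f x - (P^[j] g x + P^[φ k] f x₀)| ≤ ε k := by
    intro k j x
    have hbound : ∀ y, |P^[φ k] f y - P^[φ k] f x₀ - g y| ≤ ε k := by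
      intro y; rw [hε k]; exact Finset.le_sup' (fun x => |P^[φ k] f x - P^[φ k] f x₀ - g x|) (Finset.mem_univ y)
    have h1 : ∀ y, P^[φ k] f y ≤ (fun y => g y + P^[φ k] f x₀) y + ε k := by
      intro y
      show P^[φ k] f y ≤ g y + P^[φ k] f x₀ + ε k
      linarith [(abs_le.1 (hbound y)).2]
    have h2 : ∀ y, (fun y => g y + P^[φ k] f x₀) y ≤ P^[φ k] f y + ε k := by
      intro y
      show g y + P^[φ k] f x₀ ≤ P^[φ k] f y + ε k
      linarith [(abs_le.1 (hbound y)).1]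
    have H1 := hPit j _ _ _ h1 x
    have H2 := hPit j _ _ _ h2 x
    rw [← Function.iterate_add_apply] at H1 H2
    rw [hPitconst j (P^[φ k] f x₀) g x] at H1 H2
    rw [abs_le]
    constructor <;> linarith
  -- identification of increment extrema along the orbit of g
  have hAj : ∀ j, Finset.univ.sup' ne' (fun x => P^[j+1] g x - P^[j] g x) = A := by
    intro j
    have hcomp : Tendsto (fun k => j + φ k) atTop atTop :=
      tendsto_atTop_mono (fun k => Nat.le_add_left (φ k) j) hφ.tendsto_atTop
    have T1 : Tendsto (fun k => a (j + φ k)) atTop (nhds A) := hA.comp hcomp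
    have hbd2 : ∀ k, |a (j + φ k)
        - Finset.univ.sup' ne' (fun x => P^[j+1] g x - P^[j] g x)| ≤ 2 * ε k := by
      intro k
      rw [ha]
      apply aux_sup_diff
      intro x _
      have e1 := hE k (j+1) x
      have e0 := hE k j x
      rw [show (j+1) + φ k = j + φ k + 1 by omega] at e1
      have A1 := abs_le.1 e1
      have A2 := abs_le.1 e0
      rw [abs_le]
      constructor <;> linarith
    have T2 : Tendsto (fun k => a (j + φ k)) atTop
        (nhds (Finset.univ.sup' ne' (fun x => P^[j+1] g x - P^[j] g x))) := by
      rw [tendsto_iff_dist_tendsto_zero]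
      apply squeeze_zero (fun k => dist_nonneg) ?_ (by simpa using hεlim.const_mul 2)
      intro k
      rw [Real.dist_eq]
      exact hbd2 k
    exact tendsto_nhds_unique T2 T1
  have hBj : ∀ j, Finset.univ.inf' ne' (fun x => P^[j+1] g x - P^[j] g x) = B := by
    intro j
    have hcomp : Tendsto (fun k => j + φ k) atTop atTop :=
      tendsto_atTop_mono (fun k => Nat.le_add_left (φ k) j) hφ.tendsto_atTop
    have T1 : Tendsto (fun k => b (j + φ k)) atTop (nhds B) := hB.comp hcomp
    have hbd2 : ∀ k, |b (j + φ k)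
        - Finset.univ.inf' ne' (fun x => P^[j+1] g x - P^[j] g x)| ≤ 2 * ε k := by
      intro k
      rw [hb]
      apply aux_inf_diff
      intro x _
      have e1 := hE k (j+1) x
      have e0 := hE k j x
      rw [show (j+1) + φ k = j + φ k + 1 by omega] at e1
      have A1 := abs_le.1 e1
      have A2 := abs_le.1 e0
      rw [abs_le]
      constructor <;> linarith
    have T2 : Tendsto (fun k => b (j + φ k)) atTop
        (nhds (Finset.univ.inf' ne' (fun x => P^[j+1] g x - P^[j] g x))) := by
      rw [tendsto_iff_dist_tendsto_zero]
      apply squeeze_zero (fun k => dist_nonneg) ?_ (by simpa using hεlim.const_mul 2)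
      intro k
      rw [Real.dist_eq]
      exact hbd2 k
    exact tendsto_nhds_unique T2 T1
  -- averaging recursion for increments of g-orbit
  have hustep : ∀ j x, P^[j+2] g x - P^[j+1] g x ≤ ((P^[j+1] g x - P^[j] g x) + A)/2 := by
    intro j x
    have hub : ∀ y, P^[j+1] g y ≤ P^[j] g y + A := by
      intro y
      have h1 : P^[j+1] g y - P^[j] g y ≤ A := by
        rw [← hAj j]; exact Finset.le_sup' (fun x => P^[j+1] g x - P^[j] g x) (Finset.mem_univ y)
      linarith
    have hq := hQkey (P^[j+1] g) (P^[j] g) A hub x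
    have e1 : P^[j+2] g x
        = (P^[j+1] g x + Real.log (Λ (fun y => Real.exp (P^[j+1] g y)) x)) / 2 := by
      have h := congrFun (hP (P^[j+1] g)) x
      rw [← Function.iterate_succ_apply' P (j+1) g] at h
      exact h
    have e2 : P^[j+1] g x
        = (P^[j] g x + Real.log (Λ (fun y => Real.exp (P^[j] g y)) x)) / 2 := by
      have h := congrFun (hP (P^[j] g)) x
      rw [← Function.iterate_succ_apply' P j g] at h
      exact h
    linarith
  have hustep' : ∀ j x, ((P^[j+1] g x - P^[j] g x) + B)/2 ≤ P^[j+2] g x - P^[j+1] g x := by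
    intro j x
    have hub : ∀ y, P^[j] g y ≤ P^[j+1] g y + -B := by
      intro y
      have h1 : B ≤ P^[j+1] g y - P^[j] g y := by
        rw [← hBj j]; exact Finset.inf'_le _ (Finset.mem_univ y)
      linarith
    have hq := hQkey (P^[j] g) (P^[j+1] g) (-B) hub x
    have e1 : P^[j+2] g x
        = (P^[j+1] g x + Real.log (Λ (fun y => Real.exp (P^[j+1] g y)) x)) / 2 := by
      have h := congrFun (hP (P^[j+1] g)) x
      rw [← Function.iterate_succ_apply' P (j+1) g] at h
      exact h
    have e2 : P^[j+1] g x
        = (P^[j] g x + Real.log (Λ (fun y => Real.exp (P^[j] g y)) x)) / 2 := by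
      have h := congrFun (hP (P^[j] g)) x
      rw [← Function.iterate_succ_apply' P j g] at h
      exact h
    linarith
  -- argmax/argmin stability
  have hdesc : ∀ j x, P^[j+2] g x - P^[j+1] g x = A → P^[j+1] g x - P^[j] g x = A := by
    intro j x hx
    have h1 := hustep j x
    rw [hx] at h1
    have h2 : P^[j+1] g x - P^[j] g x ≤ A := by
      rw [← hAj j]; exact Finset.le_sup' (fun x => P^[j+1] g x - P^[j] g x) (Finset.mem_univ x)
    have h3 : A ≤ P^[j+1] g x - P^[j] g x := by linarith
    exact le_antisymm h2 h3
  have hdesc' : ∀ j x, P^[j+2] g x - P^[j+1] g x = B → P^[j+1] g x - P^[j] g x = B := by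
    intro j x hx
    have h1 := hustep' j x
    rw [hx] at h1
    have h2 : B ≤ P^[j+1] g x - P^[j] g x := by
      rw [← hBj j]; exact Finset.inf'_le _ (Finset.mem_univ x)
    have h3 : P^[j+1] g x - P^[j] g x ≤ B := by linarith
    exact le_antisymm h3 h2
  have hdown : ∀ (d j : ℕ) (x : Fin N), P^[j+d+1] g x - P^[j+d] g x = A →
      P^[j+1] g x - P^[j] g x = A := by
    intro d
    induction d with
    | zero => intro j x h; exact h
    | succ d ih =>
      intro j x h
      exact ih j x (hdesc (j+d) x h)
  have hdown' : ∀ (d j : ℕ) (x : Fin N), P^[j+d+1] g x - P^[j+d] g x = B →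
      P^[j+1] g x - P^[j] g x = B := by
    intro d
    induction d with
    | zero => intro j x h; exact h
    | succ d ih =>
      intro j x h
      exact ih j x (hdesc' (j+d) x h)
  -- pigeonhole: a common maximizer / minimizer for all times
  have hsup_att : ∀ j, ∃ x, P^[j+1] g x - P^[j] g x = A := by
    intro j
    obtain ⟨x, -, hx⟩ := Finset.exists_mem_eq_sup' ne' (fun x => P^[j+1] g x - P^[j] g x)
    exact ⟨x, by rw [← hx]; exact hAj j⟩
  have hinf_att : ∀ j, ∃ x, P^[j+1] g x - P^[j] g x = B := by
    intro j
    obtain ⟨x, -, hx⟩ := Finset.exists_mem_eq_inf' ne' (fun x => P^[j+1] g x - P^[j] g x)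
    exact ⟨x, by rw [← hx]; exact hBj j⟩
  choose xa hxa using hsup_att
  choose xb hxb using hinf_att
  obtain ⟨xs, hxs⟩ : ∃ xs : Fin N, ∀ j, ∃ i, j ≤ i ∧ xa i = xs := by
    obtain ⟨xs, hxs⟩ := Finite.exists_infinite_fiber xa
    refine ⟨xs, fun j => ?_⟩
    have hinf : (xa ⁻¹' {xs}).Infinite := Set.infinite_coe_iff.mp hxs
    obtain ⟨i, hi, hji⟩ := hinf.exists_gt j
    exact ⟨i, le_of_lt hji, hi⟩
  obtain ⟨ys, hys⟩ : ∃ ys : Fin N, ∀ j, ∃ i, j ≤ i ∧ xb i = ys := by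
    obtain ⟨ys, hys⟩ := Finite.exists_infinite_fiber xb
    refine ⟨ys, fun j => ?_⟩
    have hinf : (xb ⁻¹' {ys}).Infinite := Set.infinite_coe_iff.mp hys
    obtain ⟨i, hi, hji⟩ := hinf.exists_gt j
    exact ⟨i, le_of_lt hji, hi⟩
  have hall : ∀ j, P^[j+1] g xs - P^[j] g xs = A := by
    intro j
    obtain ⟨i, hji, hxi⟩ := hxs j
    have hi : P^[i+1] g xs - P^[i] g xs = A := by rw [← hxi]; exact hxa i
    rw [show i = j + (i - j) by omega] at hi
    exact hdown (i - j) j xs hi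
  have hall' : ∀ j, P^[j+1] g ys - P^[j] g ys = B := by
    intro j
    obtain ⟨i, hji, hxi⟩ := hys j
    have hi : P^[i+1] g ys - P^[i] g ys = B := by rw [← hxi]; exact hxb i
    rw [show i = j + (i - j) by omega] at hi
    exact hdown' (i - j) j ys hi
  -- linear growth of the gap
  have hgrow : ∀ j : ℕ, P^[j] g xs - P^[j] g ys = (g xs - g ys) + (j : ℝ) * (A - B) := by
    intro j
    induction j with
    | zero => simp
    | succ j ih =>
      have h1 := hall j
      have h2 := hall' j
      push_cast
      push_cast at ih
      linarith
  -- A = B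
  have hAB : A ≤ B := by
    by_contra hcon
    push_neg at hcon
    have hd : (0:ℝ) < A - B := by linarith
    have hC : Tendsto (fun k => P^[φ k] f xs - P^[φ k] f ys) atTop (nhds (g xs - g ys)) := by
      have h := (hcoord xs).sub (hcoord ys)
      have heq : (fun k => (P^[φ k] f xs - P^[φ k] f x₀) - (P^[φ k] f ys - P^[φ k] f x₀))
          = fun k => P^[φ k] f xs - P^[φ k] f ys := by funext k; ring
      rwa [heq] at h
    have hev := hC.eventually_lt_const (lt_add_one (g xs - g ys))
    obtain ⟨k₀, hk₀⟩ := eventually_atTop.1 hev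
    obtain ⟨n₁, hn₁⟩ := exists_nat_gt ((1 + 2 * ε 0) / (A - B))
    set K := max k₀ (φ 0 + n₁) with hK
    have hK1 : k₀ ≤ K := le_max_left _ _
    have hφK : φ 0 + n₁ ≤ φ K := le_trans (le_max_right _ _) hφ.le_apply
    have hj : (φ K - φ 0) + φ 0 = φ K := Nat.sub_add_cancel (by omega)
    have e1 := hE 0 (φ K - φ 0) xs
    have e2 := hE 0 (φ K - φ 0) ys
    rw [hj] at e1 e2
    have hg := hgrow (φ K - φ 0)
    have hn1' : n₁ ≤ φ K - φ 0 := by omega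
    have hn1c : (n₁ : ℝ) ≤ ((φ K - φ 0 : ℕ) : ℝ) := Nat.cast_le.mpr hn1'
    have hmul : (n₁ : ℝ) * (A - B) ≤ ((φ K - φ 0 : ℕ) : ℝ) * (A - B) :=
      mul_le_mul_of_nonneg_right hn1c hd.le
    have hgt : 1 + 2 * ε 0 < (n₁ : ℝ) * (A - B) := by
      rw [div_lt_iff₀ hd] at hn₁
      linarith
    have hlt := hk₀ K hK1
    have A1 := abs_le.1 e1
    have A2 := abs_le.1 e2
    linarith
  have hBA : B ≤ A := by
    rw [← hAj 0, ← hBj 0]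
    exact le_trans (Finset.inf'_le _ (Finset.mem_univ x₀)) (Finset.le_sup' (fun x => P^[0+1] g x - P^[0] g x) (Finset.mem_univ x₀))
  have hABeq : A = B := le_antisymm hAB hBA
  -- g is (additively) fixed
  have hPg1 : ∀ x, P^[0+1] g x - P^[0] g x = A := by
    intro x
    have h2 : P^[0+1] g x - P^[0] g x ≤ A := by
      rw [← hAj 0]; exact Finset.le_sup' (fun x => P^[0+1] g x - P^[0] g x) (Finset.mem_univ x)
    have h3 : B ≤ P^[0+1] g x - P^[0] g x := by
      rw [← hBj 0]; exact Finset.inf'_le _ (Finset.mem_univ x)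
    rw [← hABeq] at h3
    exact le_antisymm h2 h3
  have hPg : ∀ x, P g x = g x + A := by
    intro x
    have h4 : P g x - g x = A := by simpa using hPg1 x
    linarith
  have hgj : ∀ (j : ℕ) (x : Fin N), P^[j] g x = g x + (j : ℝ) * A := by
    intro j
    induction j with
    | zero => intro x; simp
    | succ j ih =>
      intro x
      rw [Function.iterate_succ_apply']
      have hfun : P^[j] g = fun y => g y + (j : ℝ) * A := funext ih
      rw [hfun, hPconst ((j : ℝ) * A) g x, hPg x]
      push_cast
      ring
  -- conclusion
  rw [tendsto_pi_nhds]
  intro x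
  rw [Metric.tendsto_atTop]
  intro δ hδ
  have h4 : (0:ℝ) < δ/4 := by linarith
  obtain ⟨k, hk⟩ := (hεlim.eventually_lt_const h4).exists
  refine ⟨φ k, fun n hn => ?_⟩
  have e1 := hE k (n - φ k) x
  have e2 := hE k (n - φ k) x₀
  rw [Nat.sub_add_cancel hn] at e1 e2
  rw [hgj] at e1 e2
  rw [hgx₀] at e2
  have A1 := abs_le.1 e1
  have A2 := abs_le.1 e2
  rw [Real.dist_eq, abs_lt]
  have hek := hε0 k
  constructor <;> linarith
end

section
/- Let V be a finite set partitioned as V = X ⊔ K ⊔ Y with K nonempty, and let d be a metric on V such that d(x,y) = min_{z∈K} (d(x,z) + d(z,y)) for all x ∈ X and y ∈ Y. Then the extremal Lipschitz extension S maps Lip(1,K) into Lip(1,V): for every f : K → ℝ with |f(z) − f(z′)| ≤ d(z,z′) for all z, z′ ∈ K, the function Sf satisfies |Sf(u) − Sf(v)| ≤ d(u,v) for all u, v ∈ V. -/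
theorem stmt13 {V : Type*} [Fintype V] [DecidableEq V] [MetricSpace V]
    (X K Y : Finset V) (hK : K.Nonempty)
    (hXK : Disjoint X K) (hXY : Disjoint X Y) (hKY : Disjoint K Y)
    (hcover : ∀ v : V, v ∈ X ∨ v ∈ K ∨ v ∈ Y)
    (hsep : ∀ x ∈ X, ∀ y ∈ Y, dist x y = K.inf' hK fun z => dist x z + dist z y)
    (S : (V → ℝ) → (V → ℝ))
    (hSK : ∀ (f : V → ℝ), ∀ z ∈ K, S f z = f z)
    (hSX : ∀ (f : V → ℝ), ∀ x ∈ X, S f x = K.sup' hK fun z => f z - dist x z)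
    (hSY : ∀ (f : V → ℝ), ∀ y ∈ Y, S f y = K.inf' hK fun z => f z + dist y z) :
    ∀ f : V → ℝ, (∀ z ∈ K, ∀ z' ∈ K, |f z - f z'| ≤ dist z z') →
      ∀ u v : V, |S f u - S f v| ≤ dist u v := by
  intro f hf u v
  have hXKc : ∀ x ∈ X, ∀ w ∈ K, |S f x - S f w| ≤ dist x w := by
    intro x hx w hw
    rw [hSX f x hx, hSK f w hw, abs_sub_le_iff]
    constructor
    · rw [sub_le_iff_le_add]
      apply Finset.sup'_le
      intro z hz
      have h1 : f z - f w ≤ dist z w := (abs_sub_le_iff.mp (hf z hz w hw)).1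
      have h2 : dist z w ≤ dist z x + dist x w := dist_triangle z x w
      have h3 : dist z x = dist x z := dist_comm z x
      linarith
    · have h1 := Finset.le_sup' (fun z => f z - dist x z) hw
      linarith
  have hYKc : ∀ y ∈ Y, ∀ w ∈ K, |S f y - S f w| ≤ dist y w := by
    intro y hy w hw
    rw [hSY f y hy, hSK f w hw, abs_sub_le_iff]
    constructor
    · have h1 := Finset.inf'_le (fun z => f z + dist y z) hw
      linarith
    · rw [sub_le_iff_le_add]
      rw [← sub_le_iff_le_add']
      apply Finset.le_inf'
      intro z hz
      have h1 : f w - f z ≤ dist w z := (abs_sub_le_iff.mp (hf w hw z hz)).1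
      have h2 : dist w z ≤ dist w y + dist y z := dist_triangle w y z
      have h3 : dist w y = dist y w := dist_comm w y
      linarith
  have hXXhalf : ∀ x ∈ X, ∀ x' ∈ X, S f x - S f x' ≤ dist x x' := by
    intro x hx x' hx'
    rw [hSX f x hx, hSX f x' hx', sub_le_iff_le_add]
    apply Finset.sup'_le
    intro z hz
    have h1 := Finset.le_sup' (fun z => f z - dist x' z) hz
    have h2 : dist x' z ≤ dist x' x + dist x z := dist_triangle x' x z
    have h3 : dist x' x = dist x x' := dist_comm x' x
    linarith
  have hYYhalf : ∀ y ∈ Y, ∀ y' ∈ Y, S f y - S f y' ≤ dist y y' := by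
    intro y hy y' hy'
    rw [hSY f y hy, hSY f y' hy']
    have h : (K.inf' hK fun z => f z + dist y z) - dist y y' ≤
        K.inf' hK fun z => f z + dist y' z := by
      apply Finset.le_inf'
      intro z hz
      have h1 := Finset.inf'_le (fun z => f z + dist y z) hz
      have h2 : dist y z ≤ dist y y' + dist y' z := dist_triangle y y' z
      linarith
    linarith
  have hXYc : ∀ x ∈ X, ∀ y ∈ Y, |S f x - S f y| ≤ dist x y := by
    intro x hx y hy
    rw [hSX f x hx, hSY f y hy, abs_sub_le_iff]
    constructor
    · rw [sub_le_iff_le_add]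
      apply Finset.sup'_le
      intro z hz
      rw [← sub_le_iff_le_add']
      apply Finset.le_inf'
      intro w hw
      have h1 : f z - f w ≤ dist z w := (abs_sub_le_iff.mp (hf z hz w hw)).1
      have h2 : dist z w ≤ dist z x + dist x w := dist_triangle z x w
      have h3 : dist x w ≤ dist x y + dist y w := dist_triangle x y w
      have h4 : dist z x = dist x z := dist_comm z x
      linarith
    · obtain ⟨z0, hz0, hz0e⟩ := Finset.exists_mem_eq_inf' hK (fun z => dist x z + dist z y)
      have hd : dist x y = dist x z0 + dist z0 y := by rw [hsep x hx y hy, hz0e]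
      have h1 := Finset.inf'_le (fun z => f z + dist y z) hz0
      have h2 := Finset.le_sup' (fun z => f z - dist x z) hz0
      have h3 : dist z0 y = dist y z0 := dist_comm z0 y
      linarith
  rcases hcover u with hu | hu | hu <;> rcases hcover v with hv | hv | hv
  · rw [abs_sub_le_iff]
    refine ⟨hXXhalf u hu v hv, ?_⟩
    have := hXXhalf v hv u hu
    rwa [dist_comm v u] at this
  · exact hXKc u hu v hv
  · exact hXYc u hu v hv
  · rw [abs_sub_comm, dist_comm]; exact hXKc v hv u hu
  · rw [hSK f u hu, hSK f v hv]; exact hf u hu v hv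
  · rw [abs_sub_comm, dist_comm]; exact hYKc v hv u hu
  · rw [abs_sub_comm, dist_comm]; exact hXYc v hv u hu
  · exact hYKc u hu v hv
  · rw [abs_sub_le_iff]
    refine ⟨hYYhalf u hu v hv, ?_⟩
    have := hYYhalf v hv u hu
    rwa [dist_comm v u] at this
end

section
/- Let V be a finite set partitioned as V = X ⊔ K ⊔ Y with K nonempty, and let d be a metric on V such that d(x,y) = min_{z∈K} (d(x,z) + d(z,y)) for all x ∈ X and y ∈ Y. Let P : ℝ^V → ℝ^V satisfy Ric_1(P,d) ≥ 0, i.e., Lip(Pf) ≤ 1 whenever Lip(f) ≤ 1. Define P̃ : ℝ^K → ℝ^K by P̃f := (P(Sf))|_K. Then Ric_1(P̃, d|_{K×K}) ≥ 0: for every f ∈ Lip(1,K), one has P̃f ∈ Lip(1,K), i.e., |P̃f(z) − P̃f(z′)| ≤ d(z,z′) for all z, z′ ∈ K. -/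
theorem stmt14 {V : Type*} [Fintype V] [DecidableEq V] [MetricSpace V]
    (X K Y : Finset V) (hK : K.Nonempty)
    (hXK : Disjoint X K) (hXY : Disjoint X Y) (hKY : Disjoint K Y)
    (hcover : ∀ v : V, v ∈ X ∨ v ∈ K ∨ v ∈ Y)
    (hsep : ∀ x ∈ X, ∀ y ∈ Y, dist x y = K.inf' hK fun z => dist x z + dist z y)
    (S : (V → ℝ) → (V → ℝ))
    (hSK : ∀ (f : V → ℝ), ∀ z ∈ K, S f z = f z)
    (hSX : ∀ (f : V → ℝ), ∀ x ∈ X, S f x = K.sup' hK fun z => f z - dist x z)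
    (hSY : ∀ (f : V → ℝ), ∀ y ∈ Y, S f y = K.inf' hK fun z => f z + dist y z)
    (P : (V → ℝ) → (V → ℝ))
    (ric : ∀ f : V → ℝ, (∀ u v, |f u - f v| ≤ dist u v) →
      ∀ u v, |P f u - P f v| ≤ dist u v) :
    ∀ f : V → ℝ, (∀ z ∈ K, ∀ z' ∈ K, |f z - f z'| ≤ dist z z') →
      ∀ z ∈ K, ∀ z' ∈ K, |P (S f) z - P (S f) z'| ≤ dist z z' := by
  intro f hf
  -- bounds for x ∈ X against any z ∈ K
  have A : ∀ x ∈ X, ∀ z ∈ K, f z - dist x z ≤ S f x ∧ S f x ≤ f z + dist x z := by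
    intro x hx z hz
    rw [hSX f x hx]
    refine ⟨Finset.le_sup' (fun z => f z - dist x z) hz, Finset.sup'_le _ _ ?_⟩
    intro w hw
    have h1 := hf w hw z hz
    rw [abs_sub_le_iff] at h1
    have h2 := dist_triangle w x z
    have h3 := dist_comm w x
    linarith [h1.1]
  -- bounds for y ∈ Y against any z ∈ K
  have B : ∀ y ∈ Y, ∀ z ∈ K, f z - dist y z ≤ S f y ∧ S f y ≤ f z + dist y z := by
    intro y hy z hz
    rw [hSY f y hy]
    refine ⟨Finset.le_inf' _ _ ?_, Finset.inf'_le (fun z => f z + dist y z) hz⟩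
    intro w hw
    have h1 := hf z hz w hw
    rw [abs_sub_le_iff] at h1
    have h2 := dist_triangle z y w
    have h3 := dist_comm z y
    linarith [h1.1]
  -- one-sided X-X
  have XX : ∀ u ∈ X, ∀ v ∈ X, S f u - S f v ≤ dist u v := by
    intro u hu v hv
    rw [hSX f u hu, sub_le_iff_le_add]
    apply Finset.sup'_le
    intro w hw
    have h1 := (A v hv w hw).1
    have h2 := dist_triangle v u w
    have h3 := dist_comm v u
    linarith
  -- one-sided Y-Y
  have YY : ∀ u ∈ Y, ∀ v ∈ Y, S f u - S f v ≤ dist u v := by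
    intro u hu v hv
    have : S f v ≥ (K.inf' hK fun z => f z + dist u z) - dist u v := by
      rw [hSY f v hv]
      apply Finset.le_inf'
      intro w hw
      have h1 : (K.inf' hK fun z => f z + dist u z) ≤ f w + dist u w :=
        Finset.inf'_le _ hw
      have h2 := dist_triangle u v w
      linarith
    rw [hSY f u hu]
    linarith
  -- X-Y : S f u - S f v ≤ dist u v for u ∈ X, v ∈ Y
  have XY1 : ∀ u ∈ X, ∀ v ∈ Y, S f u - S f v ≤ dist u v := by
    intro u hu v hv
    obtain ⟨z₂, hz₂, hz₂eq⟩ := Finset.exists_mem_eq_inf' hK fun z => f z + dist v z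
    have hv2 : S f v = f z₂ + dist v z₂ := by rw [hSY f v hv, hz₂eq]
    have h1 := (A u hu z₂ hz₂).2
    have h2 := dist_triangle u v z₂
    linarith
  have XY2 : ∀ u ∈ X, ∀ v ∈ Y, S f v - S f u ≤ dist u v := by
    intro u hu v hv
    have hs := hsep u hu v hv
    obtain ⟨z, hz, hzeq⟩ := Finset.exists_mem_eq_inf' hK fun w => dist u w + dist w v
    have hd : dist u v = dist u z + dist z v := by rw [hs, hzeq]
    have h1 := (A u hu z hz).1
    have h2 := (B v hv z hz).2
    have h3 := dist_comm z v
    linarith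
  have hLip : ∀ u v, |S f u - S f v| ≤ dist u v := by
    intro u v
    rw [abs_sub_le_iff]
    rcases hcover u with hu | hu | hu <;> rcases hcover v with hv | hv | hv
    · exact ⟨XX u hu v hv, by rw [dist_comm]; exact XX v hv u hu⟩
    · have h := A u hu v hv
      rw [hSK f v hv]
      constructor <;> [skip; rw [dist_comm]] <;> linarith [h.1, h.2, dist_comm u v]
    · exact ⟨XY1 u hu v hv, XY2 u hu v hv⟩
    · have h := A v hv u hu
      rw [hSK f u hu]
      constructor <;> [rw [dist_comm]; skip] <;> linarith [h.1, h.2, dist_comm v u]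
    · rw [hSK f u hu, hSK f v hv]
      have := hf u hu v hv
      rw [abs_sub_le_iff] at this
      exact this
    · have h := B v hv u hu
      rw [hSK f u hu]
      constructor <;> [rw [dist_comm]; skip] <;> linarith [h.1, h.2, dist_comm v u]
    · exact ⟨by rw [dist_comm]; exact XY2 v hv u hu, by rw [dist_comm]; exact XY1 v hv u hu⟩
    · have h := B u hu v hv
      rw [hSK f v hv]
      constructor <;> [skip; rw [dist_comm]] <;> linarith [h.1, h.2, dist_comm u v]
    · exact ⟨YY u hu v hv, by rw [dist_comm]; exact YY v hv u hu⟩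
  intro z _ z' _
  exact ric (S f) hLip z z'
end

section
/- Let V be a finite nonempty set with |V| elements, let w : V × V → [0,∞) be symmetric with w(x,x) = 0, take vertex measure m ≡ 1, and let p > 1. Let ε > 0, δ ≥ 0, x ∈ V, and F, G : V → ℝ. If (F − εΔ_p F)(v) ≥ (G − εΔ_p G)(v) + δ·|V|·𝟙_x(v) for every v ∈ V, then F(x) ≥ G(x) + δ. -/
noncomputable def stmtPhi (q t : ℝ) : ℝ := |t| ^ q * Real.sign t

lemma stmtPhi_neg (q t : ℝ) : stmtPhi q (-t) = -stmtPhi q t := by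
  simp [stmtPhi, Real.sign_neg]

lemma stmtPhi_mono {q : ℝ} (hq : 0 ≤ q) {a b : ℝ} (hab : a ≤ b) :
    stmtPhi q a ≤ stmtPhi q b := by
  unfold stmtPhi
  rcases lt_trichotomy b 0 with hb | hb | hb
  · have ha : a < 0 := lt_of_le_of_lt hab hb
    rw [Real.sign_of_neg ha, Real.sign_of_neg hb]
    have : |b| ≤ |a| := by rw [abs_of_neg ha, abs_of_neg hb]; linarith
    have := Real.rpow_le_rpow (abs_nonneg b) this hq
    nlinarith
  · subst hb
    rcases lt_or_eq_of_le hab with ha | ha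
    · rw [Real.sign_of_neg ha, Real.sign_zero]
      have := Real.rpow_nonneg (abs_nonneg a) q
      nlinarith
    · rw [ha]
  · rw [Real.sign_of_pos hb]
    have hb' : 0 ≤ |b| ^ q * 1 := by
      have := Real.rpow_nonneg (abs_nonneg b) q; linarith
    rcases lt_trichotomy a 0 with ha | ha | ha
    · rw [Real.sign_of_neg ha]
      have := Real.rpow_nonneg (abs_nonneg a) q
      nlinarith
    · subst ha; rw [Real.sign_zero]; simpa using hb'
    · rw [Real.sign_of_pos ha]
      have : |a| ≤ |b| := by rw [abs_of_pos ha, abs_of_pos hb]; exact hab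
      have := Real.rpow_le_rpow (abs_nonneg a) this hq
      nlinarith

theorem stmt16 {V : Type*} [Fintype V] [DecidableEq V] [Nonempty V]
    (w : V → V → ℝ) (hsymm : ∀ a b, w a b = w b a) (hloop : ∀ a, w a a = 0)
    (hnonneg : ∀ a b, 0 ≤ w a b)
    (p : ℝ) (hp : 1 < p)
    (Δp : (V → ℝ) → (V → ℝ))
    (hΔp : ∀ (f : V → ℝ) (v : V),
      Δp f v = ∑ u : V, w v u * (|f u - f v| ^ (p - 1) * Real.sign (f u - f v)))
    (ε δ : ℝ) (hε : 0 < ε) (hδ : 0 ≤ δ) (x : V) (F G : V → ℝ)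
    (h : ∀ v : V, G v - ε * Δp G v + δ * (Fintype.card V : ℝ) * (if v = x then 1 else 0)
        ≤ F v - ε * Δp F v) :
    G x + δ ≤ F x := by
  by_contra hcon
  push_neg at hcon
  have hq : (0:ℝ) ≤ p - 1 := by linarith
  set q := p - 1 with hqdef
  set A : Finset V := Finset.univ.filter (fun v => F v - G v < δ) with hA
  have hxA : x ∈ A := by simp [hA]; linarith
  set T : V → V → ℝ := fun v u =>
    w v u * (stmtPhi q (F u - F v) - stmtPhi q (G u - G v)) with hT
  -- rewrite Δp difference
  have hdiff : ∀ v : V, Δp F v - Δp G v = ∑ u : V, T v u := by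
    intro v
    rw [hΔp, hΔp, ← Finset.sum_sub_distrib]
    apply Finset.sum_congr rfl
    intro u _
    simp only [hT, stmtPhi]
    ring
  -- antisymmetry of T
  have hTanti : ∀ v u : V, T v u = -T u v := by
    intro v u
    simp only [hT]
    have h1 : F v - F u = -(F u - F v) := by ring
    have h2 : G v - G u = -(G u - G v) := by ring
    rw [hsymm v u, h1, h2, stmtPhi_neg, stmtPhi_neg]
    ring
  -- inner A-A sum vanishes
  have hAA : ∑ v ∈ A, ∑ u ∈ A, T v u = 0 := by
    have hS : ∑ v ∈ A, ∑ u ∈ A, T v u = -∑ v ∈ A, ∑ u ∈ A, T v u := by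
      conv_lhs => rw [Finset.sum_comm]
      rw [← Finset.sum_neg_distrib]
      apply Finset.sum_congr rfl
      intro u _
      rw [← Finset.sum_neg_distrib]
      exact Finset.sum_congr rfl fun v _ => hTanti v u
    linarith
  -- cross terms nonneg
  have hcross : 0 ≤ ∑ v ∈ A, ∑ u ∈ Aᶜ, T v u := by
    apply Finset.sum_nonneg
    intro v hv
    apply Finset.sum_nonneg
    intro u hu
    have hvA : F v - G v < δ := by simpa [hA] using hv
    have huA : ¬ (F u - G u < δ) := by
      simpa [hA] using (Finset.mem_compl.mp hu)
    have hle : G u - G v ≤ F u - F v := by push_neg at huA; linarith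
    have := stmtPhi_mono hq hle
    exact mul_nonneg (hnonneg v u) (by linarith)
  -- total Δ difference over A is nonneg
  have hkey : 0 ≤ ∑ v ∈ A, (Δp F v - Δp G v) := by
    have : ∑ v ∈ A, (Δp F v - Δp G v)
        = ∑ v ∈ A, ∑ u ∈ A, T v u + ∑ v ∈ A, ∑ u ∈ Aᶜ, T v u := by
      rw [← Finset.sum_add_distrib]
      apply Finset.sum_congr rfl
      intro v _
      rw [hdiff v, ← Finset.sum_add_sum_compl A (T v)]
    rw [this, hAA, zero_add]
    exact hcross
  -- sum hypothesis over A
  have hsumh : ∑ v ∈ A, (G v - ε * Δp G v)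
      + δ * (Fintype.card V : ℝ) * ∑ v ∈ A, (if v = x then (1:ℝ) else 0)
      ≤ ∑ v ∈ A, (F v - ε * Δp F v) := by
    rw [Finset.mul_sum, ← Finset.sum_add_distrib]
    exact Finset.sum_le_sum fun v _ => h v
  have hind : ∑ v ∈ A, (if v = x then (1:ℝ) else 0) = 1 := by
    rw [Finset.sum_ite_eq' A x (fun _ => (1:ℝ))]
    simp [hxA]
  rw [hind, mul_one] at hsumh
  have hsplit : ∑ v ∈ A, (F v - ε * Δp F v) - ∑ v ∈ A, (G v - ε * Δp G v)
      = ∑ v ∈ A, (F v - G v) - ε * ∑ v ∈ A, (Δp F v - Δp G v) := by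
    rw [← Finset.sum_sub_distrib, Finset.mul_sum, ← Finset.sum_sub_distrib]
    apply Finset.sum_congr rfl
    intro v _
    ring
  have hεkey : 0 ≤ ε * ∑ v ∈ A, (Δp F v - Δp G v) :=
    mul_nonneg hε.le hkey
  have h1 : δ * (Fintype.card V : ℝ) ≤ ∑ v ∈ A, (F v - G v) := by linarith
  have h2 : ∑ v ∈ A, (F v - G v) < ∑ v ∈ A, δ := by
    apply Finset.sum_lt_sum_of_nonempty ⟨x, hxA⟩
    intro v hv
    simpa [hA] using hv
  have h3 : ∑ v ∈ A, δ ≤ δ * (Fintype.card V : ℝ) := by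
    rw [Finset.sum_const, nsmul_eq_mul, mul_comm]
    apply mul_le_mul_of_nonneg_left _ hδ
    exact_mod_cast Finset.card_le_card (Finset.subset_univ A)
  linarith
end

section
/- Let (V, w, m) be a finite connected weighted graph and φ : ℝ → ℝ be odd, increasing, and convex on [0,∞). Let x ~ y, let C > 0, and let f : V → ℝ satisfy |f(u) − f(v)| ≤ C·d₀(u,v) for all u, v ∈ V and f(y) − f(x) = C. Let π : V × V → [0,∞) vanish outside B₁(x) × B₁(y), satisfy the marginal conditions Σ_{x′∈B₁(x)} π(x′,y′) = w(y,y′)/m(y) for every y′ ~ y and Σ_{y′∈B₁(y)} π(x′,y′) = w(x,x′)/m(x) for every x′ ~ x, and satisfy π(x′,y′) = 0 whenever x′ = y′. Then Δ_φ f(x) − Δ_φ f(y) ≥ φ(C) · Σ_{x′,y′∈V} π(x′,y′)·(1 − d₀(x′,y′)). -/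
/-!
The marginal conditions turn `Δ_φ f(x) - Δ_φ f(y)` into
`∑ π(x', y') (φ(f x' - f x) - φ(f y' - f y))`, so it suffices to bound each summand with
`π(x', y') ≠ 0`. There `s = f x' - f x` and `t = f y' - f y` satisfy `|s|, |t| ≤ C` and
`t - s ≤ C (d₀(x', y') - 1)`, and `d₀(x', y') ≥ 1` because `π` vanishes on the diagonal.
For `d₀ = 1` monotonicity gives `φ t ≤ φ s`, for `d₀ ≥ 3` the crude bound `φ s - φ t ≥ -2 φ(C)`
suffices, and for `d₀ = 2` one needs `φ t ≤ φ s + φ C`, which follows from oddness and the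
superadditivity of `φ` on `[0, ∞)` that convexity and `φ 0 = 0` provide.
-/

open Finset

section Superadditive

variable {φ : ℝ → ℝ}

theorem ConvexOn.map_mul_le_mul (hconv : ConvexOn ℝ (Set.Ici 0) φ) (h0 : φ 0 ≤ 0) {θ x : ℝ}
    (hθ₀ : 0 ≤ θ) (hθ₁ : θ ≤ 1) (hx : 0 ≤ x) : φ (θ * x) ≤ θ * φ x := by
  have h := hconv.2 (Set.mem_Ici.2 hx) (Set.mem_Ici.2 le_rfl) hθ₀ (sub_nonneg.2 hθ₁)
    (add_sub_cancel θ 1)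
  simp only [smul_eq_mul, mul_zero, add_zero] at h
  nlinarith

theorem ConvexOn.add_le_map_add (hconv : ConvexOn ℝ (Set.Ici 0) φ) (h0 : φ 0 ≤ 0) {u v : ℝ}
    (hu : 0 ≤ u) (hv : 0 ≤ v) : φ u + φ v ≤ φ (u + v) := by
  rcases (add_nonneg hu hv).eq_or_lt with huv | huv
  · obtain ⟨rfl, rfl⟩ : u = 0 ∧ v = 0 := ⟨by linarith, by linarith⟩
    simpa using h0
  have hθ {r : ℝ} (hr : 0 ≤ r) (hle : r ≤ u + v) : φ r ≤ r / (u + v) * φ (u + v) := by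
    simpa [div_mul_cancel₀ r huv.ne'] using
      hconv.map_mul_le_mul h0 (div_nonneg hr huv.le) (div_le_one_of_le₀ hle huv.le) huv.le
  calc φ u + φ v ≤ u / (u + v) * φ (u + v) + v / (u + v) * φ (u + v) :=
        add_le_add (hθ hu (by linarith)) (hθ hv (by linarith))
    _ = φ (u + v) := by field_simp

theorem mul_one_sub_le_map_sub_map (hodd : Function.Odd φ) (hmono : Monotone φ)
    (hsuper : ∀ u v, 0 ≤ u → 0 ≤ v → φ u + φ v ≤ φ (u + v)) {C s t : ℝ} {n : ℕ} (hn : 1 ≤ n)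
    (hs : |s| ≤ C) (ht : |t| ≤ C) (hts : t - s ≤ C * (n - 1)) :
    φ C * (1 - n) ≤ φ s - φ t := by
  have hφs : -φ C ≤ φ s := hodd C ▸ hmono (neg_le_of_abs_le hs)
  have hφt : φ t ≤ φ C := hmono (le_of_abs_le ht)
  have hφC : 0 ≤ φ C := hodd.map_zero ▸ hmono ((abs_nonneg s).trans hs)
  obtain rfl | rfl | hn3 : n = 1 ∨ n = 2 ∨ 3 ≤ n := by omega
  · have : φ t ≤ φ s := hmono (by simpa using hts)
    simpa using this
  · have hφts : φ t ≤ φ s + φ C := by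
      rcases le_total 0 s with hs0 | hs0
      · linarith [hodd.map_zero ▸ hmono hs0]
      · have h := hsuper (s + C) (-s) (by linarith [neg_le_of_abs_le hs]) (neg_nonneg.2 hs0)
        rw [add_neg_cancel_comm, hodd s] at h
        linarith [hmono (show t ≤ s + C by norm_num at hts; linarith)]
    norm_num
    linarith
  · have : (3 : ℝ) ≤ n := by exact_mod_cast hn3
    nlinarith

end Superadditive

theorem SimpleGraph.Connected.adj_of_dist_le_one {V : Type*} {G : SimpleGraph V}
    (hconn : G.Connected) {u v : V} (hne : u ≠ v) (h : G.dist u v ≤ 1) : G.Adj u v :=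
  G.dist_eq_one_iff_adj.1 (le_antisymm h (hconn.pos_dist_of_ne hne))

theorem SimpleGraph.sum_mul_eq_sum_sum_mul_of_marginal {V : Type*} [Fintype V]
    (G : SimpleGraph V) (x : V) {k g : V → ℝ} {π : V → V → ℝ} (hg : g x = 0)
    (hk : ∀ a, x ≠ a → ¬G.Adj x a → k a = 0) (hπ : ∀ a b, x ≠ a → ¬G.Adj x a → π a b = 0)
    (hmarg : ∀ a, G.Adj x a → ∑ b, π a b = k a) :
    ∑ a, k a * g a = ∑ a, ∑ b, π a b * g a := by
  refine sum_congr rfl fun a _ => ?_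
  rw [← sum_mul]
  by_cases hadj : G.Adj x a
  · rw [hmarg a hadj]
  by_cases hxa : x = a
  · simp [← hxa, hg]
  rw [hk a hxa hadj, sum_eq_zero fun b _ => hπ a b hxa hadj]

theorem SimpleGraph.Connected.mul_one_sub_dist_le_map_sub_map {V : Type*} {G : SimpleGraph V}
    (hconn : G.Connected) {φ : ℝ → ℝ} (hodd : Function.Odd φ) (hmono : Monotone φ)
    (hsuper : ∀ u v, 0 ≤ u → 0 ≤ v → φ u + φ v ≤ φ (u + v)) {C : ℝ} (hC : 0 ≤ C) {f : V → ℝ}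
    (hLip : ∀ u v, |f u - f v| ≤ C * G.dist u v) {x y a b : V} (hfC : f y - f x = C)
    (hab : a ≠ b) (ha : G.dist x a ≤ 1) (hb : G.dist y b ≤ 1) :
    φ C * (1 - G.dist a b) ≤ φ (f a - f x) - φ (f b - f y) := by
  have hnear {u v : V} (h : G.dist u v ≤ 1) : |f v - f u| ≤ C := by
    rw [abs_sub_comm]
    exact (hLip u v).trans (mul_le_of_le_one_right hC (by exact_mod_cast h))
  refine mul_one_sub_le_map_sub_map hodd hmono hsuper (hconn.pos_dist_of_ne hab) (hnear ha)
    (hnear hb) ?_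
  linarith [le_of_abs_le ((abs_sub_comm _ _).trans_le (hLip a b))]

theorem mul_sum_sum_mul_le {ι κ : Type*} [Fintype ι] [Fintype κ] {π r h : ι → κ → ℝ} {c : ℝ}
    (hπ : ∀ a b, 0 ≤ π a b) (hle : ∀ a b, π a b ≠ 0 → c * r a b ≤ h a b) :
    c * ∑ a, ∑ b, π a b * r a b ≤ ∑ a, ∑ b, π a b * h a b := by
  simp_rw [mul_sum]
  refine sum_le_sum fun a _ => sum_le_sum fun b _ => ?_
  by_cases hab : π a b = 0
  · simp [hab]
  nlinarith [mul_le_mul_of_nonneg_left (hle a b hab) (hπ a b)]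

theorem stmt17_general {V : Type*} [Fintype V]
    (w : V → V → ℝ)
    (hnonneg : ∀ a b, 0 ≤ w a b)
    (m : V → ℝ)
    (G : SimpleGraph V) (hGadj : ∀ a b, G.Adj a b ↔ a ≠ b ∧ 0 < w a b)
    (hconn : G.Connected)
    (d₀ : V → V → ℕ) (hd₀ : ∀ a b, d₀ a b = G.dist a b)
    (φ : ℝ → ℝ) (hodd : ∀ t, φ (-t) = -φ t) (hmono : Monotone φ)
    (hconv : ConvexOn ℝ (Set.Ici 0) φ)
    (Δφ : (V → ℝ) → (V → ℝ))
    (hΔφ : ∀ (f : V → ℝ) (v : V), Δφ f v = ∑ u : V, w v u / m v * φ (f u - f v))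
    (x y : V)
    (C : ℝ) (hC : 0 < C)
    (f : V → ℝ) (hLip : ∀ u v, |f u - f v| ≤ C * (d₀ u v : ℝ))
    (hfC : f y - f x = C)
    (π : V → V → ℝ) (hπ : ∀ a b, 0 ≤ π a b)
    (hsupp : ∀ a b, π a b ≠ 0 → d₀ x a ≤ 1 ∧ d₀ y b ≤ 1)
    (hmarg1 : ∀ y' : V, G.Adj y y' → ∑ a : V, π a y' = w y y' / m y)
    (hmarg2 : ∀ x' : V, G.Adj x x' → ∑ b : V, π x' b = w x x' / m x)
    (hno3 : ∀ a : V, π a a = 0) :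
    φ C * ∑ a : V, ∑ b : V, π a b * (1 - (d₀ a b : ℝ)) ≤ Δφ f x - Δφ f y := by
  have hφ0 : φ 0 = 0 := Function.Odd.map_zero hodd
  simp only [hd₀] at hLip hsupp ⊢
  have hw : ∀ u v, u ≠ v → ¬G.Adj u v → w u v / m u = 0 := fun u v hne hadj => by
    rw [((hnonneg u v).eq_or_lt.resolve_right fun hpos => hadj ((hGadj u v).2 ⟨hne, hpos⟩)).symm,
      zero_div]
  have hrow : ∀ a b, x ≠ a → ¬G.Adj x a → π a b = 0 := fun a b hxa hadj => by_contra fun hab =>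
    hadj (hconn.adj_of_dist_le_one hxa (hsupp a b hab).1)
  have hcol : ∀ b a, y ≠ b → ¬G.Adj y b → π a b = 0 := fun b a hyb hadj => by_contra fun hab =>
    hadj (hconn.adj_of_dist_le_one hyb (hsupp a b hab).2)
  have hx : Δφ f x = ∑ a, ∑ b, π a b * φ (f a - f x) := by
    rw [hΔφ]
    exact G.sum_mul_eq_sum_sum_mul_of_marginal x (by simp [hφ0]) (hw x) hrow hmarg2
  have hy : Δφ f y = ∑ a, ∑ b, π a b * φ (f b - f y) := by
    rw [hΔφ, sum_comm]
    exact G.sum_mul_eq_sum_sum_mul_of_marginal (π := fun b a => π a b) y (by simp [hφ0]) (hw y)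
      hcol hmarg1
  rw [hx, hy, ← sum_sub_distrib]
  simp_rw [← sum_sub_distrib, ← mul_sub]
  refine mul_sum_sum_mul_le hπ fun a b hab => ?_
  exact hconn.mul_one_sub_dist_le_map_sub_map hodd hmono (fun _ _ => hconv.add_le_map_add hφ0.le)
    hC.le hLip hfC (fun h => hab (h ▸ hno3 a)) (hsupp a b hab).1 (hsupp a b hab).2

theorem stmt17 {V : Type*} [Fintype V] [DecidableEq V]
    (w : V → V → ℝ) (hsymm : ∀ a b, w a b = w b a) (hloop : ∀ a, w a a = 0)
    (hnonneg : ∀ a b, 0 ≤ w a b)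
    (m : V → ℝ) (hm : ∀ a, 0 < m a)
    (G : SimpleGraph V) (hGadj : ∀ a b, G.Adj a b ↔ a ≠ b ∧ 0 < w a b)
    (hconn : G.Connected)
    (d₀ : V → V → ℕ) (hd₀ : ∀ a b, d₀ a b = G.dist a b)
    (φ : ℝ → ℝ) (hodd : ∀ t, φ (-t) = -φ t) (hmono : Monotone φ)
    (hconv : ConvexOn ℝ (Set.Ici 0) φ)
    (Δφ : (V → ℝ) → (V → ℝ))
    (hΔφ : ∀ (f : V → ℝ) (v : V), Δφ f v = ∑ u : V, w v u / m v * φ (f u - f v))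
    (x y : V) (hxy : G.Adj x y)
    (C : ℝ) (hC : 0 < C)
    (f : V → ℝ) (hLip : ∀ u v, |f u - f v| ≤ C * (d₀ u v : ℝ))
    (hfC : f y - f x = C)
    (π : V → V → ℝ) (hπ : ∀ a b, 0 ≤ π a b)
    (hsupp : ∀ a b, π a b ≠ 0 → d₀ x a ≤ 1 ∧ d₀ y b ≤ 1)
    (hmarg1 : ∀ y' : V, G.Adj y y' → ∑ a : V, π a y' = w y y' / m y)
    (hmarg2 : ∀ x' : V, G.Adj x x' → ∑ b : V, π x' b = w x x' / m x)
    (hno3 : ∀ a : V, π a a = 0) :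
    φ C * ∑ a : V, ∑ b : V, π a b * (1 - (d₀ a b : ℝ)) ≤ Δφ f x - Δφ f y :=
  stmt17_general w hnonneg m G hGadj hconn d₀ hd₀ φ hodd hmono hconv Δφ hΔφ x y C hC f hLip hfC π hπ
    hsupp hmarg1 hmarg2 hno3
end

section
/- Let (V, w, m) be a finite connected weighted graph and φ : ℝ → ℝ be odd, increasing, and concave on [0,∞). Let x ~ y, let C > 0, and let f : V → ℝ satisfy |f(u) − f(v)| ≤ C·d₀(u,v) for all u, v ∈ V and f(y) − f(x) = C. Let π : V × V → [0,∞) vanish outside B₁(x) × B₁(y), satisfy the marginal conditions Σ_{x′∈B₁(x)} π(x′,y′) = w(y,y′)/m(y) for every y′ ~ y and Σ_{y′∈B₁(y)} π(x′,y′) = w(x,x′)/m(x) for every x′ ~ x, and satisfy π(x′,y′) = 0 whenever x′ ≠ x, y′ ≠ y and d₀(x′,y′) = 2. Then Δ_φ f(x) − Δ_φ f(y) ≥ φ(C) · Σ_{x′,y′∈V} π(x′,y′)·(1 − d₀(x′,y′)). -/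
/-!
Both Laplacians are averages against the transport plan: by the marginal conditions,
`Δ_φ f x - Δ_φ f y = ∑ π(a, b) (φ(f a - f x) - φ(f b - f y))`, since the terms `a = x`, `b = y`
vanish as `φ 0 = 0`. It then suffices to bound each summand with `π(a, b) ≠ 0` by
`φ C (1 - d₀(a, b))`, by cases on `d₀(a, b)`. For `a = b` the two increments sum to `C`, and
concavity with `φ 0 = 0` makes `φ` subadditive on `[0, ∞)`; for `d₀ = 1` the Lipschitz bound
orders the increments; for `d₀ = 2` the absence of 5-cycles forces `a = x` or `b = y`, so one
increment vanishes; for `d₀ ≥ 3` the crude bound `|φ| ≤ φ C` suffices.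
-/

open Finset

theorem ConcaveOn.map_add_le_of_nonneg {φ : ℝ → ℝ} (hconc : ConcaveOn ℝ (Set.Ici 0) φ)
    (h0 : 0 ≤ φ 0) {s t : ℝ} (hs : 0 ≤ s) (ht : 0 ≤ t) : φ (s + t) ≤ φ s + φ t := by
  rcases (add_nonneg hs ht).eq_or_lt with hst | hst
  · obtain rfl : s = 0 := by linarith
    obtain rfl : t = 0 := by linarith
    simpa using h0
  -- on the chord from 0 to s + t, concavity and φ 0 ≥ 0 give φ u ≥ u / (s + t) * φ (s + t)
  have chord : ∀ u, 0 ≤ u → u ≤ s + t → u / (s + t) * φ (s + t) ≤ φ u := by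
    intro u hu0 hu1
    have hle : u / (s + t) ≤ 1 := (div_le_one hst).2 hu1
    have := hconc.2 (Set.mem_Ici.2 le_rfl) hst.le (sub_nonneg.2 hle) (div_nonneg hu0 hst.le)
      (sub_add_cancel _ _)
    simp only [smul_eq_mul, mul_zero, zero_add, div_mul_cancel₀ u hst.ne'] at this
    nlinarith [sub_nonneg.2 hle]
  calc φ (s + t) = (s / (s + t) + t / (s + t)) * φ (s + t) := by field_simp
    _ ≤ φ s + φ t := by
      rw [add_mul]
      exact add_le_add (chord s hs (by linarith)) (chord t ht (by linarith))

theorem mul_one_sub_le_map_sub_map_s18 {φ : ℝ → ℝ} (hodd : φ.Odd) (hmono : Monotone φ)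
    (hconc : ConcaveOn ℝ (Set.Ici 0) φ) {C s t : ℝ} {d : ℕ} (hs : |s| ≤ C) (ht : |t| ≤ C)
    (h0 : d = 0 → s - t = C) (h1 : d = 1 → t ≤ s) (h2 : d = 2 → s = 0 ∨ t = 0) :
    φ C * (1 - d) ≤ φ s - φ t := by
  have hφ0 : φ 0 = 0 := hodd.map_zero
  have hφC : 0 ≤ φ C := hφ0 ▸ hmono ((abs_nonneg s).trans hs)
  have hlo : ∀ u, |u| ≤ C → -φ C ≤ φ u := fun u hu => hodd C ▸ hmono (neg_le_of_abs_le hu)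
  have hhi : ∀ u, |u| ≤ C → φ u ≤ φ C := fun u hu => hmono (le_of_abs_le hu)
  match d with
  | 0 =>
    have hst := h0 rfl
    have hs0 : 0 ≤ s := by linarith [neg_le_of_abs_le ht]
    have hφt : φ t = -φ (C - s) := by rw [← hodd]; congr 1; linarith
    have := hconc.map_add_le_of_nonneg hφ0.ge hs0 (sub_nonneg.2 (le_of_abs_le hs))
    rw [add_sub_cancel] at this
    push_cast
    linarith
  | 1 =>
    push_cast
    linarith [hmono (h1 rfl)]
  | 2 =>
    push_cast
    rcases h2 rfl with rfl | rfl
    · linarith [hhi t ht]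
    · linarith [hlo s hs]
  | n + 3 =>
    push_cast
    nlinarith [hlo s hs, hhi t ht, (n.cast_nonneg : (0 : ℝ) ≤ n)]

theorem SimpleGraph.Connected.eq_or_adj_of_dist_le_one {V : Type*} {G : SimpleGraph V}
    (hconn : G.Connected) {u v : V} (h : G.dist u v ≤ 1) : u = v ∨ G.Adj u v := by
  interval_cases hd : G.dist u v
  · exact .inl (hconn.dist_eq_zero_iff.1 hd)
  · exact .inr (SimpleGraph.dist_eq_one_iff_adj.1 hd)

theorem abs_sub_le_of_dist_le_one {V : Type*} {G : SimpleGraph V} {f : V → ℝ} {C : ℝ}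
    (hC : 0 ≤ C) (hLip : ∀ u v, |f u - f v| ≤ C * G.dist u v) {u v : V} (h : G.dist u v ≤ 1) :
    |f u - f v| ≤ C :=
  (hLip u v).trans (mul_le_of_le_one_right hC (by exact_mod_cast h))

theorem sum_eq_weight_div_of_ne {V : Type*} [Fintype V] {G : SimpleGraph V}
    (hconn : G.Connected) {w : V → V → ℝ} (hnonneg : ∀ a b, 0 ≤ w a b)
    (hGadj : ∀ a b, G.Adj a b ↔ a ≠ b ∧ 0 < w a b) {ρ : V → V → ℝ} {x : V} {μ : ℝ}
    (hsupp : ∀ a b, ρ a b ≠ 0 → G.dist x a ≤ 1)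
    (hmarg : ∀ a, G.Adj x a → ∑ b, ρ a b = w x a / μ) {a : V} (ha : a ≠ x) :
    ∑ b, ρ a b = w x a / μ := by
  by_cases hadj : G.Adj x a
  · exact hmarg a hadj
  have hw : w x a = 0 := by
    by_contra hw
    exact hadj ((hGadj x a).2 ⟨ha.symm, (hnonneg x a).lt_of_ne' hw⟩)
  rw [hw, zero_div]
  refine sum_eq_zero fun b _ => ?_
  by_contra hb
  rcases hconn.eq_or_adj_of_dist_le_one (hsupp a b hb) with h | h
  exacts [ha h.symm, hadj h]

theorem sum_mul_eq_sum_sum_of_row_sums {ι κ : Type*} [Fintype ι] [Fintype κ] {c g : ι → ℝ}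
    {ρ : ι → κ → ℝ} {x : ι} (hg : g x = 0) (hρ : ∀ a, a ≠ x → ∑ b, ρ a b = c a) :
    ∑ a, c a * g a = ∑ a, ∑ b, ρ a b * g a := by
  refine sum_congr rfl fun a _ => ?_
  rcases eq_or_ne a x with rfl | ha
  · simp [hg]
  · rw [← sum_mul, hρ a ha]

theorem mul_sum_sum_le_sum_sum_sub {ι κ : Type*} [Fintype ι] [Fintype κ] {π D : ι → κ → ℝ}
    {c : ℝ} {u : ι → ℝ} {v : κ → ℝ} (hπ : ∀ a b, 0 ≤ π a b)
    (h : ∀ a b, π a b ≠ 0 → c * D a b ≤ u a - v b) :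
    c * ∑ a, ∑ b, π a b * D a b ≤ ∑ a, ∑ b, π a b * u a - ∑ a, ∑ b, π a b * v b := by
  rw [← sum_sub_distrib, mul_sum]
  refine sum_le_sum fun a _ => ?_
  rw [← sum_sub_distrib, mul_sum]
  refine sum_le_sum fun b _ => ?_
  rcases eq_or_ne (π a b) 0 with hab | hab
  · simp [hab]
  · rw [← mul_sub, mul_left_comm]
    exact mul_le_mul_of_nonneg_left (h a b hab) (hπ a b)

theorem stmt18_general {V : Type*} [Fintype V]
    (w : V → V → ℝ)
    (hnonneg : ∀ a b, 0 ≤ w a b)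
    (m : V → ℝ)
    (G : SimpleGraph V) (hGadj : ∀ a b, G.Adj a b ↔ a ≠ b ∧ 0 < w a b)
    (hconn : G.Connected)
    (d₀ : V → V → ℕ) (hd₀ : ∀ a b, d₀ a b = G.dist a b)
    (φ : ℝ → ℝ) (hodd : ∀ t, φ (-t) = -φ t) (hmono : Monotone φ)
    (hconc : ConcaveOn ℝ (Set.Ici 0) φ)
    (Δφ : (V → ℝ) → (V → ℝ))
    (hΔφ : ∀ (f : V → ℝ) (v : V), Δφ f v = ∑ u : V, w v u / m v * φ (f u - f v))
    (x y : V)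
    (C : ℝ) (hC : 0 < C)
    (f : V → ℝ) (hLip : ∀ u v, |f u - f v| ≤ C * (d₀ u v : ℝ))
    (hfC : f y - f x = C)
    (π : V → V → ℝ) (hπ : ∀ a b, 0 ≤ π a b)
    (hsupp : ∀ a b, π a b ≠ 0 → d₀ x a ≤ 1 ∧ d₀ y b ≤ 1)
    (hmarg1 : ∀ y' : V, G.Adj y y' → ∑ a : V, π a y' = w y y' / m y)
    (hmarg2 : ∀ x' : V, G.Adj x x' → ∑ b : V, π x' b = w x x' / m x)
    (hno5 : ∀ a b : V, a ≠ x → b ≠ y → d₀ a b = 2 → π a b = 0) :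
    φ C * ∑ a : V, ∑ b : V, π a b * (1 - (d₀ a b : ℝ)) ≤ Δφ f x - Δφ f y := by
  simp only [hd₀] at hLip hsupp hno5 ⊢
  have hφ0 : φ 0 = 0 := Function.Odd.map_zero hodd
  have hΔx : Δφ f x = ∑ a, ∑ b, π a b * φ (f a - f x) :=
    (hΔφ f x).trans <| sum_mul_eq_sum_sum_of_row_sums (by simp [hφ0]) fun a ha =>
      sum_eq_weight_div_of_ne hconn hnonneg hGadj (fun a b h => (hsupp a b h).1) hmarg2 ha
  have hΔy : Δφ f y = ∑ a, ∑ b, π a b * φ (f b - f y) := by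
    rw [sum_comm, hΔφ]
    exact sum_mul_eq_sum_sum_of_row_sums (by simp [hφ0]) fun b hb =>
      sum_eq_weight_div_of_ne hconn hnonneg hGadj (fun b a h => (hsupp a b h).2) hmarg1 hb
  have summand_bound : ∀ a b, π a b ≠ 0 →
      φ C * (1 - G.dist a b) ≤ φ (f a - f x) - φ (f b - f y) := by
    intro a b hab
    obtain ⟨hxa, hyb⟩ := hsupp a b hab
    refine mul_one_sub_le_map_sub_map_s18 hodd hmono hconc ?_ ?_ (fun h => ?_) (fun h => ?_)
      (fun h => ?_)
    · exact abs_sub_comm (f x) (f a) ▸ abs_sub_le_of_dist_le_one hC.le hLip hxa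
    · exact abs_sub_comm (f y) (f b) ▸ abs_sub_le_of_dist_le_one hC.le hLip hyb
    · rw [hconn.dist_eq_zero_iff.1 h]
      linarith
    · have := neg_le_of_abs_le (abs_sub_le_of_dist_le_one hC.le hLip h.le)
      linarith
    · by_contra! hst
      exact hab (hno5 a b (fun h => hst.1 (by simp [h])) (fun h => hst.2 (by simp [h])) h)
  rw [hΔx, hΔy]
  exact mul_sum_sum_le_sum_sum_sub hπ summand_bound

theorem stmt18 {V : Type*} [Fintype V] [DecidableEq V]
    (w : V → V → ℝ) (hsymm : ∀ a b, w a b = w b a) (hloop : ∀ a, w a a = 0)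
    (hnonneg : ∀ a b, 0 ≤ w a b)
    (m : V → ℝ) (hm : ∀ a, 0 < m a)
    (G : SimpleGraph V) (hGadj : ∀ a b, G.Adj a b ↔ a ≠ b ∧ 0 < w a b)
    (hconn : G.Connected)
    (d₀ : V → V → ℕ) (hd₀ : ∀ a b, d₀ a b = G.dist a b)
    (φ : ℝ → ℝ) (hodd : ∀ t, φ (-t) = -φ t) (hmono : Monotone φ)
    (hconc : ConcaveOn ℝ (Set.Ici 0) φ)
    (Δφ : (V → ℝ) → (V → ℝ))
    (hΔφ : ∀ (f : V → ℝ) (v : V), Δφ f v = ∑ u : V, w v u / m v * φ (f u - f v))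
    (x y : V) (hxy : G.Adj x y)
    (C : ℝ) (hC : 0 < C)
    (f : V → ℝ) (hLip : ∀ u v, |f u - f v| ≤ C * (d₀ u v : ℝ))
    (hfC : f y - f x = C)
    (π : V → V → ℝ) (hπ : ∀ a b, 0 ≤ π a b)
    (hsupp : ∀ a b, π a b ≠ 0 → d₀ x a ≤ 1 ∧ d₀ y b ≤ 1)
    (hmarg1 : ∀ y' : V, G.Adj y y' → ∑ a : V, π a y' = w y y' / m y)
    (hmarg2 : ∀ x' : V, G.Adj x x' → ∑ b : V, π x' b = w x x' / m x)
    (hno5 : ∀ a b : V, a ≠ x → b ≠ y → d₀ a b = 2 → π a b = 0) :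
    φ C * ∑ a : V, ∑ b : V, π a b * (1 - (d₀ a b : ℝ)) ≤ Δφ f x - Δφ f y :=
  stmt18_general w hnonneg m G hGadj hconn d₀ hd₀ φ hodd hmono hconc Δφ hΔφ x y C hC f hLip hfC π hπ
    hsupp hmarg1 hmarg2 hno5
end

section
/- Let P̃ : ℝ^N → ℝ^N be non-expansive. Then: (i) for every f ∈ ℝ^N, the map r ↦ P̃(f + r·𝟙) − r·𝟙 is componentwise non-increasing in r ∈ [0,∞); (ii) if for some g ∈ ℝ^N the limit Qg := lim_{r→∞} (P̃(g + r·𝟙) − r·𝟙) exists in ℝ^N (is finite in every coordinate), then for every f ∈ ℝ^N the limit Qf := lim_{r→∞} (P̃(f + r·𝟙) − r·𝟙) exists in ℝ^N, and the resulting map Q : ℝ^N → ℝ^N is non-expansive and constant additive: Q(f + c·𝟙) = Qf + c·𝟙 for every c ∈ ℝ. -/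
open Filter

theorem stmt19 (N : ℕ) (Pt : (Fin N → ℝ) → (Fin N → ℝ))
    (nonexp : ∀ f g : Fin N → ℝ, ‖Pt f - Pt g‖ ≤ ‖f - g‖) :
    (∀ (f : Fin N → ℝ) (r s : ℝ), 0 ≤ r → r ≤ s → ∀ x : Fin N,
        Pt (fun y => f y + s) x - s ≤ Pt (fun y => f y + r) x - r) ∧
    (∀ (g Qg : Fin N → ℝ),
      Tendsto (fun r : ℝ => fun x => Pt (fun y => g y + r) x - r) atTop (nhds Qg) →
      ∃ Q : (Fin N → ℝ) → (Fin N → ℝ),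
        (∀ f : Fin N → ℝ,
          Tendsto (fun r : ℝ => fun x => Pt (fun y => f y + r) x - r) atTop (nhds (Q f))) ∧
        (∀ f h : Fin N → ℝ, ‖Q f - Q h‖ ≤ ‖f - h‖) ∧
        (∀ (f : Fin N → ℝ) (c : ℝ), Q (fun y => f y + c) = fun y => Q f y + c)) := by
  have comp : ∀ (v : Fin N → ℝ) (x : Fin N), v x ≤ ‖v‖ := by
    intro v x
    calc v x ≤ |v x| := le_abs_self _
    _ ≤ ‖v‖ := norm_le_pi_norm v x
  -- key non-expansion shift bound
  have shift : ∀ (f g : Fin N → ℝ) (r : ℝ),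
      ‖Pt (fun y => f y + r) - Pt (fun y => g y + r)‖ ≤ ‖f - g‖ := by
    intro f g r
    refine le_trans (nonexp _ _) (le_of_eq ?_)
    congr 1
    funext y
    simp [Pi.sub_apply]
  have anti : ∀ (f : Fin N → ℝ) (x : Fin N),
      Antitone (fun r : ℝ => Pt (fun y => f y + r) x - r) := by
    intro f x r s hrs
    simp only
    have h1 := nonexp (fun y => f y + s) (fun y => f y + r)
    have h2 : ‖(fun y => f y + s) - (fun y => f y + r)‖ ≤ s - r := by
      have he : ((fun y => f y + s) - fun y => f y + r) = fun _ => s - r := by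
        funext y; simp [Pi.sub_apply]
      rw [he]
      refine (pi_norm_le_iff_of_nonneg (by linarith)).2 fun y => ?_
      rw [Real.norm_eq_abs, abs_of_nonneg (by linarith)]
    have h3 := comp (Pt (fun y => f y + s) - Pt (fun y => f y + r)) x
    simp only [Pi.sub_apply] at h3
    have := le_trans h3 (le_trans h1 h2)
    linarith
  refine ⟨fun f r s _ hrs x => anti f x hrs, ?_⟩
  intro g Qg hg
  -- coordinatewise lower bound for g's orbit
  have hgx : ∀ x, Tendsto (fun r : ℝ => Pt (fun y => g y + r) x - r) atTop (nhds (Qg x)) :=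
    fun x => tendsto_pi_nhds.1 hg x
  have glb : ∀ (r : ℝ) (x : Fin N), Qg x ≤ Pt (fun y => g y + r) x - r := by
    intro r x
    refine le_of_tendsto (hgx x) (eventually_atTop.2 ⟨r, fun s hs => anti g x hs⟩)
  -- lower bound for any f
  have flb : ∀ (f : Fin N → ℝ) (x : Fin N), BddBelow
      (Set.range fun r : ℝ => Pt (fun y => f y + r) x - r) := by
    intro f x
    refine ⟨Qg x - ‖f - g‖, ?_⟩
    rintro _ ⟨r, rfl⟩
    show Qg x - ‖f - g‖ ≤ Pt (fun y => f y + r) x - r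
    have h1 := comp (Pt (fun y => g y + r) - Pt (fun y => f y + r)) x
    simp only [Pi.sub_apply] at h1
    have h2 := le_trans h1 (shift g f r)
    have h3 : ‖g - f‖ = ‖f - g‖ := norm_sub_rev _ _
    have h4 := glb r x
    rw [h3] at h2
    linarith
  set Q : (Fin N → ℝ) → (Fin N → ℝ) :=
    fun f x => ⨅ r : ℝ, (Pt (fun y => f y + r) x - r) with hQdef
  have hQ : ∀ f, Tendsto (fun r : ℝ => fun x => Pt (fun y => f y + r) x - r)
      atTop (nhds (Q f)) := by
    intro f
    refine tendsto_pi_nhds.2 fun x => ?_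
    exact tendsto_atTop_ciInf (anti f x) (flb f x)
  refine ⟨Q, hQ, ?_, ?_⟩
  · intro f h
    have hsub : Tendsto (fun r : ℝ => ‖(fun x => Pt (fun y => f y + r) x - r)
        - (fun x => Pt (fun y => h y + r) x - r)‖) atTop (nhds ‖Q f - Q h‖) :=
      ((hQ f).sub (hQ h)).norm
    refine le_of_tendsto hsub (Eventually.of_forall fun r => ?_)
    have he : ((fun x => Pt (fun y => f y + r) x - r)
        - fun x => Pt (fun y => h y + r) x - r)
        = Pt (fun y => f y + r) - Pt (fun y => h y + r) := by
      funext x; simp [Pi.sub_apply]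
    rw [he]
    exact shift f h r
  · intro f c
    have h1 : Tendsto (fun r : ℝ => fun x => Pt (fun y => f y + (c + r)) x - (c + r))
        atTop (nhds (Q f)) :=
      (hQ f).comp (tendsto_atTop_add_const_left atTop c tendsto_id)
    have h2 : Tendsto (fun r : ℝ => fun x => Pt (fun y => (f y + c) + r) x - r)
        atTop (nhds (fun x => Q f x + c)) := by
      refine tendsto_pi_nhds.2 fun x => ?_
      have h3 := (tendsto_pi_nhds.1 h1 x).add_const c
      refine h3.congr fun r => ?_
      show Pt (fun y => f y + (c + r)) x - (c + r) + c = Pt (fun y => f y + c + r) x - r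
      have he : (fun y => f y + c + r) = fun y => f y + (c + r) := by
        funext y; ring
      rw [he]; ring
    exact tendsto_nhds_unique (hQ fun y => f y + c) h2
end
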